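/- arXiv:2212.00870 — 4 statements merged into one kernel-verified Lean document; each statement's English description precedes it below -/
import Mathlib

section
/- Let n ≥ 1, let X_1,…,X_n be {0,1}-valued random variables, let p_1,…,p_n ∈ [0,1] and let a_1,…,a_n be positive reals. Suppose that for every i ∈ [n], almost surely P[X_i = 1 | X_1,…,X_{i−1}] ≤ p_i. Let Y_1,…,Y_n be independent random variables with Y_i distributed as Bernoulli(p_i). Then for every t ≥ 0, P[Σ_{i∈[n]} a_i·Y_i ≥ t] ≥ P[Σ_{i∈[n]} a_i·X_i ≥ t]. -/
/-!
Test the law of the vector of indicators `(X i = 1)ᵢ` against monotone functions `g` and induct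
on `n`, revealing the last coordinate. Given the past, `g` is affine in the last variable with
nonnegative slope `g(·, 1) - g(·, 0)`, so replacing that variable by its conditional expectation,
which is at most `p`, bounds the expectation by that of `(1 - p) g(·, 0) + p g(·, 1)`: a monotone
function of the remaining coordinates, and exactly the integral of `g` against the Bernoulli(`p`)
law in the last coordinate. Taking for `g` the indicator of the upper set `{t ≤ ∑ aᵢ bᵢ}` gives
the theorem.
-/

open MeasureTheory Fin

theorem Fin.snoc_le_snoc {n : ℕ} {α : Type*} [Preorder α] {b b' : Fin n → α} {x y : α}
    (hb : b ≤ b') (hxy : x ≤ y) : (snoc b x : Fin (n + 1) → α) ≤ snoc b' y :=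
  ((snocOrderIso fun _ => α).le_iff_le (x := (x, b)) (y := (y, b'))).mpr ⟨hxy, hb⟩

theorem Monotone.indicator_setOf_le {α β : Type*} [Preorder α] [Preorder β] {f : α → β}
    (hf : Monotone f) (t : β) : Monotone ({x | t ≤ f x}.indicator (1 : α → ℝ)) := fun x y hxy => by
  by_cases hx : t ≤ f x
  · rw [Set.indicator_of_mem (s := {x | t ≤ f x}) hx,
      Set.indicator_of_mem (s := {x | t ≤ f x}) (hx.trans (hf hxy))]
    exact le_rfl
  · rw [Set.indicator_of_notMem (s := {x | t ≤ f x}) hx]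
    exact Set.indicator_nonneg (fun _ _ => zero_le_one) y

theorem monotone_sum_mul_ite {ι : Type*} [Fintype ι] {a : ι → ℝ} (ha : ∀ i, 0 ≤ a i) :
    Monotone fun b : ι → Bool => ∑ i, a i * if b i then 1 else 0 := fun b b' hb =>
  Finset.sum_le_sum fun i _ => mul_le_mul_of_nonneg_left
    (by have := hb i; revert this; cases b i <;> cases b' i <;> simp) (ha i)

theorem ite_eq_one_eq_self {x : ℝ} (hx : x = 0 ∨ x = 1) : (if x = 1 then 1 else 0) = x := by
  rcases hx with rfl | rfl <;> norm_num

theorem integral_pi_fin_succ_eq_integral_snoc {α : Type*} [MeasurableSpace α] {n : ℕ}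
    (ν : Fin (n + 1) → Measure α) [∀ i, SigmaFinite (ν i)] {g : (Fin (n + 1) → α) → ℝ}
    (hg : Integrable g (Measure.pi ν)) :
    ∫ x, g x ∂Measure.pi ν =
      ∫ y, ∫ a, g (snoc y a) ∂ν (last n) ∂Measure.pi fun i => ν i.castSucc := by
  have e := (measurePreserving_piFinSuccAbove ν (last n)).symm
  rw [← e.integral_comp', integral_prod_symm]
  · simp only [succAbove_last, MeasurableEquiv.piFinSuccAbove_symm_apply, insertNthEquiv,
      insertNth_last']
    rfl
  · exact (e.integrable_comp_emb (MeasurableEquiv.measurableEmbedding _)).mpr hg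

noncomputable abbrev bernoulliLaw (q : ℝ) (hq : q ≤ 1) : Measure Bool :=
  (PMF.bernoulli q.toNNReal (Real.toNNReal_le_one.mpr hq)).toMeasure

theorem integral_bernoulliLaw {q : ℝ} (hq0 : 0 ≤ q) (hq1 : q ≤ 1) (f : Bool → ℝ) :
    ∫ x, f x ∂bernoulliLaw q hq1 = (1 - q) * f false + q * f true := by
  rw [integral_fintype .of_finite, Fintype.sum_bool]
  simp only [measureReal_def, PMF.toMeasure_apply_singleton _ _ (measurableSet_singleton _),
    PMF.bernoulli_apply, cond_true, cond_false, ENNReal.coe_toReal, smul_eq_mul,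
    NNReal.coe_sub (Real.toNNReal_le_one.mpr hq1), Real.coe_toNNReal _ hq0, NNReal.coe_one]
  ring

theorem integral_mul_le_of_condExp_le {Ω : Type*} {m mΩ : MeasurableSpace Ω} {μ : Measure Ω}
    [IsFiniteMeasure μ] (hm : m ≤ mΩ) {B Y : Ω → ℝ} {C c : ℝ} (hB : StronglyMeasurable[m] B)
    (hB0 : ∀ᵐ ω ∂μ, 0 ≤ B ω) (hBC : ∀ᵐ ω ∂μ, ‖B ω‖ ≤ C) (hY : Integrable Y μ)
    (hYc : ∀ᵐ ω ∂μ, μ[Y|m] ω ≤ c) :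
    ∫ ω, B ω * Y ω ∂μ ≤ c * ∫ ω, B ω ∂μ := by
  have hBY : μ[B * Y|m] =ᵐ[μ] B * μ[Y|m] := condExp_stronglyMeasurable_mul_of_bound hm hB hY C hBC
  calc ∫ ω, B ω * Y ω ∂μ = ∫ ω, μ[B * Y|m] ω ∂μ := (integral_condExp hm).symm
    _ = ∫ ω, B ω * μ[Y|m] ω ∂μ := integral_congr_ae hBY
    _ ≤ ∫ ω, B ω * c ∂μ := by
      refine integral_mono_ae (integrable_condExp.congr hBY)
        ((Integrable.of_bound (hB.mono hm).aestronglyMeasurable C hBC).mul_const c) ?_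
      filter_upwards [hB0, hYc] with ω h0 hc using mul_le_mul_of_nonneg_left hc h0
    _ = c * ∫ ω, B ω ∂μ := by rw [integral_mul_const, mul_comm]

section pastSigma

variable {Ω β : Type*} [MeasurableSpace β] {n : ℕ}

abbrev pastSigma (X : Fin n → Ω → β) (i : Fin n) : MeasurableSpace Ω :=
  ⨆ (j : Fin n) (_ : j < i), MeasurableSpace.comap (X j) ‹MeasurableSpace β›

theorem pastSigma_le [mΩ : MeasurableSpace Ω] {X : Fin n → Ω → β} (hX : ∀ i, Measurable (X i))
    (i : Fin n) : pastSigma X i ≤ mΩ :=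
  iSup₂_le fun j _ => (hX j).comap_le

theorem measurable_pastSigma (X : Fin n → Ω → β) {i j : Fin n} (hji : j < i) :
    Measurable[pastSigma X i] (X j) :=
  Measurable.of_comap_le (le_iSup₂_of_le j hji le_rfl)

theorem pastSigma_castSucc (X : Fin (n + 1) → Ω → β) (i : Fin n) :
    pastSigma (fun k => X k.castSucc) i = pastSigma X i.castSucc := by
  refine le_antisymm (iSup₂_le fun j hj => ?_) (iSup₂_le fun j hj => ?_)
  · exact le_iSup₂_of_le j.castSucc (castSucc_lt_castSucc_iff.mpr hj) le_rfl
  · obtain ⟨k, rfl⟩ := exists_castSucc_eq.mpr (ne_last_of_lt hj)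
    exact le_iSup₂_of_le (f := fun k (_ : k < i) => MeasurableSpace.comap (X k.castSucc) _)
      k (castSucc_lt_castSucc_iff.mp hj) le_rfl

end pastSigma

theorem integral_comp_le_of_condExp_le {Ω β : Type*} {m mΩ : MeasurableSpace Ω} {μ : Measure Ω}
    [IsFiniteMeasure μ] [MeasurableSpace β] [Finite β] [MeasurableSingletonClass β]
    (hm : m ≤ mΩ) {Z : Ω → β} (hZ : Measurable[m] Z) {Y : Ω → ℝ} (hY : Measurable Y)
    (hY01 : ∀ ω, Y ω = 0 ∨ Y ω = 1) {q : ℝ} (hYq : ∀ᵐ ω ∂μ, μ[Y|m] ω ≤ q)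
    {g : β → Bool → ℝ} (hg : ∀ b, g b false ≤ g b true) :
    ∫ ω, g (Z ω) (decide (Y ω = 1)) ∂μ ≤
      ∫ ω, ((1 - q) * g (Z ω) false + q * g (Z ω) true) ∂μ := by
  set A : Ω → ℝ := fun ω => g (Z ω) false
  set B : Ω → ℝ := fun ω => g (Z ω) true - g (Z ω) false
  have hA : Integrable A μ :=
    (Integrable.of_finite (f := fun b => g b false)).comp_measurable (hZ.mono hm le_rfl)
  have hB : Integrable B μ :=
    (Integrable.of_finite (f := fun b => g b true - g b false)).comp_measurable (hZ.mono hm le_rfl)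
  have hBm : StronglyMeasurable[m] B :=
    ((measurable_of_finite fun b => g b true - g b false).comp hZ).stronglyMeasurable
  obtain ⟨C, hC⟩ : ∃ C, ∀ b, ‖g b true - g b false‖ ≤ C := Finite.exists_le _
  have hYi : Integrable Y μ := .of_bound hY.aestronglyMeasurable 1
    (.of_forall fun ω => by rcases hY01 ω with h | h <;> simp [h])
  have hBY : Integrable (fun ω => B ω * Y ω) μ :=
    hYi.bdd_mul hB.aestronglyMeasurable (.of_forall fun ω => hC (Z ω))
  calc ∫ ω, g (Z ω) (decide (Y ω = 1)) ∂μ = ∫ ω, (A ω + B ω * Y ω) ∂μ := by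
        refine integral_congr_ae (.of_forall fun ω => ?_)
        rcases hY01 ω with h | h <;> simp [A, B, h]
    _ = ∫ ω, A ω ∂μ + ∫ ω, B ω * Y ω ∂μ := integral_add hA hBY
    _ ≤ ∫ ω, A ω ∂μ + q * ∫ ω, B ω ∂μ := by
        gcongr
        exact integral_mul_le_of_condExp_le hm hBm (.of_forall fun ω => sub_nonneg.mpr (hg _))
          (.of_forall fun ω => hC (Z ω)) hYi hYq
    _ = ∫ ω, ((1 - q) * g (Z ω) false + q * g (Z ω) true) ∂μ := by
        rw [← integral_const_mul, ← integral_add hA (hB.const_mul q)]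
        congr 1 with ω
        ring

theorem integral_monotone_le_integral_pi_bernoulliLaw {Ω : Type*} [MeasurableSpace Ω]
    (μ : Measure Ω) [IsProbabilityMeasure μ] {n : ℕ} (X : Fin n → Ω → ℝ) (p : Fin n → ℝ)
    (hX : ∀ i, Measurable (X i)) (hX01 : ∀ i ω, X i ω = 0 ∨ X i ω = 1)
    (hp0 : ∀ i, 0 ≤ p i) (hp1 : ∀ i, p i ≤ 1)
    (hcond : ∀ i, ∀ᵐ ω ∂μ, μ[X i|pastSigma X i] ω ≤ p i)
    {g : (Fin n → Bool) → ℝ} (hg : Monotone g) :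
    ∫ ω, g (fun i => decide (X i ω = 1)) ∂μ ≤
      ∫ b, g b ∂Measure.pi fun i => bernoulliLaw (p i) (hp1 i) := by
  induction n with
  | zero =>
    have hconst (b : Fin 0 → Bool) : g b = g default := congrArg g (Subsingleton.elim _ _)
    simp [hconst]
  | succ n ih =>
    set q := p (last n)
    set h : (Fin n → Bool) → ℝ := fun b => (1 - q) * g (snoc b false) + q * g (snoc b true)
    have hh : Monotone h := fun b b' hb => by
      have : q ≤ 1 := hp1 _
      have : 0 ≤ q := hp0 _
      simp only [h]
      gcongr <;> exact hg (snoc_le_snoc hb le_rfl)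
    have hZ : Measurable[pastSigma X (last n)] fun ω (k : Fin n) => decide (X k.castSucc ω = 1) :=
      @measurable_pi_lambda _ _ _ (pastSigma X (last n)) _ _ fun k =>
        (measurable_to_bool (f := fun x : ℝ => decide (x = 1)) (by simp [Set.preimage])).comp
          (measurable_pastSigma X (castSucc_lt_last k))
    calc ∫ ω, g (fun i => decide (X i ω = 1)) ∂μ
        = ∫ ω, g (snoc (fun k => decide (X k.castSucc ω = 1)) (decide (X (last n) ω = 1))) ∂μ := by
          congr 1 with ω
          exact congrArg g (snoc_init_self _).symm
      _ ≤ ∫ ω, h (fun k => decide (X k.castSucc ω = 1)) ∂μ :=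
          integral_comp_le_of_condExp_le (g := fun b x => g (snoc b x)) (pastSigma_le hX _) hZ
            (hX _) (hX01 _) (hcond _) fun b => hg (snoc_le_snoc le_rfl (Bool.false_le _))
      _ ≤ ∫ b, h b ∂Measure.pi fun i => bernoulliLaw (p i.castSucc) (hp1 _) :=
          ih (fun k => X k.castSucc) _ (fun _ => hX _) (fun _ => hX01 _) (fun _ => hp0 _)
            (fun _ => hp1 _) (fun i => by simpa only [pastSigma_castSucc] using hcond i.castSucc) hh
      _ = ∫ b, g b ∂Measure.pi fun i => bernoulliLaw (p i) (hp1 i) := by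
          rw [integral_pi_fin_succ_eq_integral_snoc _ .of_finite]
          simp only [integral_bernoulliLaw (hp0 _) (hp1 _), h, q]

theorem bernoulli_domination_general
    {Ω : Type} [MeasurableSpace Ω] (μ : Measure Ω) [IsProbabilityMeasure μ]
    (n : ℕ) (X : Fin n → Ω → ℝ) (p : Fin n → ℝ) (a : Fin n → ℝ)
    (hX : ∀ i, Measurable (X i))
    (hX01 : ∀ i ω, X i ω = 0 ∨ X i ω = 1)
    (hp0 : ∀ i, 0 ≤ p i) (hp1 : ∀ i, p i ≤ 1)
    (ha : ∀ i, 0 < a i)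
    (hcond : ∀ i : Fin n, ∀ᵐ ω ∂μ,
      (MeasureTheory.condExp
          (⨆ (j : Fin n) (_ : j < i),
            MeasurableSpace.comap (X j) (inferInstance : MeasurableSpace ℝ))
          μ (X i)) ω ≤ p i)
    (t : ℝ) :
    μ {ω | t ≤ ∑ i, a i * X i ω} ≤
      (MeasureTheory.Measure.pi fun i : Fin n =>
          (PMF.bernoulli (Real.toNNReal (p i))
            (Real.toNNReal_le_one.mpr (hp1 i))).toMeasure)
        {b : Fin n → Bool | t ≤ ∑ i, a i * (if b i then (1 : ℝ) else 0)} := by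
  set S := {ω | t ≤ ∑ i, a i * X i ω}
  set T := {b : Fin n → Bool | t ≤ ∑ i, a i * (if b i then (1 : ℝ) else 0)}
  have hbits (ω : Ω) : T.indicator 1 (fun i => decide (X i ω = 1)) = S.indicator (1 : Ω → ℝ) ω := by
    simp only [Set.indicator_apply, T, S, Set.mem_ofPred_eq, decide_eq_true_eq,
      fun i => ite_eq_one_eq_self (hX01 i ω), Pi.one_apply]
  have hS : MeasurableSet S :=
    measurableSet_le measurable_const (Finset.measurable_sum _ fun i _ => (hX i).const_mul _)
  refine (ENNReal.toReal_le_toReal (measure_ne_top _ _) (measure_ne_top _ _)).mp ?_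
  calc μ.real S = ∫ ω, T.indicator 1 (fun i => decide (X i ω = 1)) ∂μ := by
        simp only [hbits, integral_indicator_one hS]
    _ ≤ ∫ b, T.indicator 1 b ∂Measure.pi fun i => bernoulliLaw (p i) (hp1 i) :=
        integral_monotone_le_integral_pi_bernoulliLaw μ X p hX hX01 hp0 hp1 hcond
          ((monotone_sum_mul_ite fun i => (ha i).le).indicator_setOf_le t)
    _ = _ := integral_indicator_one T.to_countable.measurableSet

/-- **Lemma 2.6 (Bernoulli domination)**: if `{0,1}`-valued random variables `X i` satisfy
`P[X i = 1 | X 0, …, X (i-1)] ≤ p i` almost surely, and `Y i` are independent `Bernoulli(p i)`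
random variables, then for every `t ≥ 0` we have `P[Σ aᵢ Yᵢ ≥ t] ≥ P[Σ aᵢ Xᵢ ≥ t]`. -/
theorem bernoulli_domination
    {Ω : Type} [MeasurableSpace Ω] (μ : Measure Ω) [IsProbabilityMeasure μ]
    (n : ℕ) (X : Fin n → Ω → ℝ) (p : Fin n → ℝ) (a : Fin n → ℝ)
    (hX : ∀ i, Measurable (X i))
    (hX01 : ∀ i ω, X i ω = 0 ∨ X i ω = 1)
    (hp0 : ∀ i, 0 ≤ p i) (hp1 : ∀ i, p i ≤ 1)
    (ha : ∀ i, 0 < a i)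
    (hcond : ∀ i : Fin n, ∀ᵐ ω ∂μ,
      (MeasureTheory.condExp
          (⨆ (j : Fin n) (_ : j < i),
            MeasurableSpace.comap (X j) (inferInstance : MeasurableSpace ℝ))
          μ (X i)) ω ≤ p i)
    (t : ℝ) (ht : 0 ≤ t) :
    μ {ω | t ≤ ∑ i, a i * X i ω} ≤
      (MeasureTheory.Measure.pi fun i : Fin n =>
          (PMF.bernoulli (Real.toNNReal (p i))
            (Real.toNNReal_le_one.mpr (hp1 i))).toMeasure)
        {b : Fin n → Bool | t ≤ ∑ i, a i * (if b i then (1 : ℝ) else 0)} :=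
  bernoulli_domination_general μ n X p a hX hX01 hp0 hp1 ha hcond t
end

section
/- Fix a prime power q and integers s > r ≥ 1. There exist constants C and c > 0 depending only on q and s such that for all sufficiently large n, all p with q^{−cn} ≤ p ≤ c, and every integer Δ ≥ 1, the following holds with probability tending to 1 as n → ∞ over L ~ Sam(Gr_q(n,r), p): there exist a collection 𝒮 ⊆ Gr_q(n,s)[L] and a set B ⊆ Gr_q(n,r−1) such that (a) every (r−1)-dimensional subspace of F_q^n is contained in at most p^{1/2}·q^n members of 𝒮; (b) |Gr_q(n,r−1) ∖ B| ≤ C·Δ·p^{1/2}·q^{(r−1)n}; and (c) for every S ∈ Gr_q(n,s)[L[B]], the reduction of ∂_{s,r}e_S modulo Δ lies in the subgroup of (Z/ΔZ)^{Gr_q(n,r)} generated by {∂_{s,r}e_{S'} mod Δ : S' ∈ 𝒮}. -/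
open scoped Classical

noncomputable section

/-- The type of `k`-dimensional `F`-linear subspaces of `F^n`. -/
abbrev Gr (F : Type) [Field F] (n k : ℕ) : Type :=
  {W : Submodule F (Fin n → F) // Module.finrank F W = k}

/-- The Gaussian binomial coefficient `[n choose k]_q` where `q = #F`. -/
def gbinom (F : Type) [Field F] [Fintype F] (n k : ℕ) : ℕ :=
  Nat.card (Gr F n k)

/-- `Gr_q(n,s)[L]`: the `s`-spaces all of whose `r`-dimensional subspaces lie in `L`. -/
def grIn (F : Type) [Field F] (n s r : ℕ) (L : Set (Gr F n r)) : Set (Gr F n s) :=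
  {S | ∀ R : Gr F n r, R.1 ≤ S.1 → R ∈ L}

/-- `L[B]`: the members of `L` all of whose `(r−1)`-dimensional subspaces lie in `B`. -/
def restr (F : Type) [Field F] (n r : ℕ) (L : Set (Gr F n r))
    (B : Set (Gr F n (r - 1))) : Set (Gr F n r) :=
  {R | R ∈ L ∧ ∀ Q : Gr F n (r - 1), Q.1 ≤ R.1 → Q ∈ B}

/-- The reduction of `∂_{s,r} e_S` modulo `Δ`, as a vector in `(ℤ/Δℤ)^{Gr_q(n,r)}`. -/
def modB (F : Type) [Field F] (n s r : ℕ) (Δ : ℕ) (S : Gr F n s) :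
    Gr F n r → ZMod Δ :=
  fun R => if R.1 ≤ S.1 then 1 else 0

/-- Property (P1): `𝒮 ⊆ Gr_q(n,s)[L]` and every `(r−1)`-space lies in at most
`p^{1/2}·q^n` members of `𝒮`. -/
def propP1 (F : Type) [Field F] [Fintype F] (n s r : ℕ) (p : ℝ)
    (L : Set (Gr F n r)) (𝒮 : Set (Gr F n s)) : Prop :=
  𝒮 ⊆ grIn F n s r L ∧
  ∀ Q : Gr F n (r - 1),
    ({S | S ∈ 𝒮 ∧ Q.1 ≤ S.1}.ncard : ℝ) ≤ p ^ ((1 : ℝ) / 2) * (Fintype.card F : ℝ) ^ n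

/-- Property (P2): `|Gr_q(n,r−1) ∖ B| ≤ C·Δ·p^{1/2}·q^{(r−1)n}` and for every
`S ∈ Gr_q(n,s)[L[B]]`, `∂_{s,r} e_S mod Δ` lies in the subgroup generated by
`{∂_{s,r} e_{S'} mod Δ : S' ∈ 𝒮}`. -/
def propP2 (F : Type) [Field F] [Fintype F] (n s r : ℕ) (C : ℝ) (Δ : ℕ) (p : ℝ)
    (L : Set (Gr F n r)) (𝒮 : Set (Gr F n s)) (B : Set (Gr F n (r - 1))) : Prop :=
  ((Bᶜ.ncard : ℝ) ≤ C * (Δ : ℝ) * p ^ ((1 : ℝ) / 2) *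
      (Fintype.card F : ℝ) ^ ((r - 1) * n)) ∧
  ∀ S ∈ grIn F n s r (restr F n r L B),
    modB F n s r Δ S ∈ AddSubgroup.closure {v | ∃ S' ∈ 𝒮, v = modB F n s r Δ S'}

/-- Property (P3): `L* ⊆ L[B]` is a regularized kernel: `|L*| = (1 ± Δp^{1/5})·p·[n,r]_q` and
every `R ∈ L*` has `(1 ± p^{1/5})·p^{b−1}·[n−r, s−r]_q` extensions to a member of
`Gr_q(n,s)[L[B]]`, where `b = [s,r]_q`. -/
def propP3 (F : Type) [Field F] [Fintype F] (n s r : ℕ) (Δ : ℕ) (p : ℝ)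
    (L : Set (Gr F n r)) (B : Set (Gr F n (r - 1))) (Lstar : Set (Gr F n r)) : Prop :=
  Lstar ⊆ restr F n r L B ∧
  ((1 - (Δ : ℝ) * p ^ ((1 : ℝ) / 5)) * p * (gbinom F n r : ℝ) ≤ (Lstar.ncard : ℝ) ∧
    (Lstar.ncard : ℝ) ≤ (1 + (Δ : ℝ) * p ^ ((1 : ℝ) / 5)) * p * (gbinom F n r : ℝ)) ∧
  ∀ R ∈ Lstar,
    (1 - p ^ ((1 : ℝ) / 5)) * p ^ (gbinom F s r - 1) *
        (gbinom F (n - r) (s - r) : ℝ) ≤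
      ({S | S ∈ grIn F n s r (restr F n r L B) ∧ R.1 ≤ S.1}.ncard : ℝ) ∧
    ({S | S ∈ grIn F n s r (restr F n r L B) ∧ R.1 ≤ S.1}.ncard : ℝ) ≤
      (1 + p ^ ((1 : ℝ) / 5)) * p ^ (gbinom F s r - 1) *
        (gbinom F (n - r) (s - r) : ℝ)

/-- The probability that `Sam(Gr_q(n,r), p)` lies in the event `E`. -/
def samP (F : Type) [Field F] [Fintype F] (n r : ℕ) (p : ℝ)
    (E : Set (Set (Gr F n r))) : ℝ :=
  ∑ᶠ L ∈ E, p ^ L.ncard * (1 - p) ^ Lᶜ.ncard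

/-!
With high probability `|L| ≤ 2p·q^{rn}`, by Chebyshev's inequality for the binomial variable
`|L|`. Fix such an `L` and the degree cap `m = ⌊p^{1/2} q^n⌋`. Among the families
`𝒮 ⊆ Gr_q(n,s)[L]` in which every `(r-1)`-space lies in at most `m` members, take one whose
vectors `∂e_S mod Δ` generate the largest subgroup, and among those one of least size. Then no
generator lies in the subgroup generated by the others, so `2^{|𝒮|} ≤ Δ^{|L|}` (the subgroup lives
on the coordinates in `L`) and `|𝒮| ≤ Δ|L|`. Let `B` be the `(r-1)`-spaces of degree `< m`; double
counting gives `|Bᶜ|·m ≤ |𝒮|·q^{s(r-1)}`, which is (b). Every `(r-1)`-subspace of an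
`S ∈ Gr_q(n,s)[L[B]]` lies in `B`, so `𝒮 ∪ {S}` still respects the cap, and maximality forces
`∂e_S mod Δ` into the subgroup generated by `𝒮`, which is (c).
-/

section Bernoulli

open Finset

variable {α : Type*}

-- `P(Sam(α, p) = L)`; `samP` is by definition its sum over an event.
def bernoulliWeight (p : ℝ) (L : Set α) : ℝ := p ^ L.ncard * (1 - p) ^ Lᶜ.ncard

theorem bernoulliWeight_nonneg {p : ℝ} (hp0 : 0 ≤ p) (hp1 : p ≤ 1) (L : Set α) :
    0 ≤ bernoulliWeight p L :=
  mul_nonneg (pow_nonneg hp0 _) (pow_nonneg (sub_nonneg.2 hp1) _)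

variable [Fintype α]

theorem sum_bernoulliWeight_of_subset (p : ℝ) (T : Finset α) :
    ∑ L : Set α, (if ↑T ⊆ L then bernoulliWeight p L else 0) = p ^ #T := by
  rw [← Fintype.finsetEquivSet.sum_comp]
  simp only [Fintype.finsetEquivSet_apply, bernoulliWeight, Set.ncard_coe_finset, ← coe_compl,
    coe_subset]
  have key := Fintype.prod_add (fun _ : α => p) (fun a => if a ∈ T then 0 else 1 - p)
  have hfactor (t : Finset α) : (∏ a ∈ tᶜ, if a ∈ T then 0 else 1 - p) =
      if T ⊆ t then (1 - p) ^ #tᶜ else 0 := by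
    simp_rw [← ite_not (p := _ ∈ T), prod_ite_zero, prod_const]
    congr 1
    simp [subset_iff, not_imp_comm]
  simp only [prod_const, hfactor, mul_ite, mul_zero] at key
  rw [← key]
  simp [apply_ite (p + ·), prod_ite_mem]

theorem sum_bernoulliWeight (p : ℝ) : ∑ L : Set α, bernoulliWeight p L = 1 := by
  simpa using sum_bernoulliWeight_of_subset p ∅

theorem Set.cast_ncard_eq_sum_ite {R : Type*} [AddCommMonoidWithOne R] (L : Set α) :
    (L.ncard : R) = ∑ a, if a ∈ L then 1 else 0 := by
  rw [sum_boole, Set.ncard_eq_toFinset_card']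
  simp [Set.toFinset]

theorem sum_bernoulliWeight_mul_ncard (p : ℝ) :
    ∑ L : Set α, bernoulliWeight p L * L.ncard = p * Fintype.card α := by
  calc ∑ L : Set α, bernoulliWeight p L * L.ncard
      = ∑ a, ∑ L : Set α, if ↑({a} : Finset α) ⊆ L then bernoulliWeight p L else 0 := by
        simp_rw [Set.cast_ncard_eq_sum_ite, mul_sum, mul_ite, mul_one, mul_zero, coe_singleton,
          Set.singleton_subset_iff]
        exact sum_comm
    _ = p * Fintype.card α := by
        simp only [sum_bernoulliWeight_of_subset, card_singleton, pow_one, sum_const, card_univ,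
          nsmul_eq_mul, mul_comm]

theorem sum_bernoulliWeight_mul_ncard_sq (p : ℝ) :
    ∑ L : Set α, bernoulliWeight p L * (L.ncard : ℝ) ^ 2 =
      p * Fintype.card α + p ^ 2 * ((Fintype.card α : ℝ) ^ 2 - Fintype.card α) := by
  have hsq (L : Set α) : bernoulliWeight p L * (L.ncard : ℝ) ^ 2 = ∑ a, ∑ b,
      if ↑({a, b} : Finset α) ⊆ L then bernoulliWeight p L else 0 := by
    simp_rw [sq, Set.cast_ncard_eq_sum_ite, sum_mul_sum, mul_sum]
    refine sum_congr rfl fun a _ => sum_congr rfl fun b _ => ?_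
    by_cases ha : a ∈ L <;> by_cases hb : b ∈ L <;> simp [ha, hb, Set.insert_subset_iff]
  have hpair (a b : α) :
      ∑ L : Set α, (if ↑({a, b} : Finset α) ⊆ L then bernoulliWeight p L else 0) =
        p ^ 2 + if a = b then p - p ^ 2 else 0 := by
    rw [sum_bernoulliWeight_of_subset]
    split_ifs with h <;> simp [h]
  rw [sum_congr rfl fun L _ => hsq L, sum_comm]
  simp_rw [sum_comm (s := (univ : Finset (Set α))) (t := (univ : Finset α)), hpair]
  simp only [sum_add_distrib, sum_ite_eq, mem_univ, if_true, sum_const, card_univ, nsmul_eq_mul]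
  ring

theorem sum_bernoulliWeight_mul_sq_sub (p : ℝ) :
    ∑ L : Set α, bernoulliWeight p L * ((L.ncard : ℝ) - p * Fintype.card α) ^ 2 =
      p * (1 - p) * Fintype.card α := by
  have hexpand (L : Set α) :
      bernoulliWeight p L * ((L.ncard : ℝ) - p * Fintype.card α) ^ 2 =
        bernoulliWeight p L * (L.ncard : ℝ) ^ 2 -
          2 * (p * Fintype.card α) * (bernoulliWeight p L * L.ncard) +
          (p * Fintype.card α) ^ 2 * bernoulliWeight p L := by
    ring
  simp_rw [hexpand, sum_add_distrib, sum_sub_distrib, ← mul_sum, sum_bernoulliWeight_mul_ncard_sq,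
    sum_bernoulliWeight_mul_ncard, sum_bernoulliWeight]
  ring

theorem sum_indicator_ncard_gt_le {p t : ℝ} (hp0 : 0 ≤ p) (hp1 : p ≤ 1) (ht : 0 < t) :
    ∑ L : Set α, {L : Set α | p * Fintype.card α + t < L.ncard}.indicator (bernoulliWeight p) L
      ≤ p * Fintype.card α / t ^ 2 := by
  set N : ℝ := (Fintype.card α : ℝ)
  have hpoint (L : Set α) : {L : Set α | p * N + t < L.ncard}.indicator (bernoulliWeight p) L
      ≤ bernoulliWeight p L * ((L.ncard : ℝ) - p * N) ^ 2 / t ^ 2 := by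
    have hw := bernoulliWeight_nonneg hp0 hp1 L
    simp only [Set.indicator_apply, Set.mem_ofPred_eq]
    split_ifs with hL
    · rw [le_div_iff₀ (by positivity)]
      exact mul_le_mul_of_nonneg_left (pow_le_pow_left₀ ht.le (by linarith) 2) hw
    · positivity
  calc _ ≤ ∑ L : Set α, bernoulliWeight p L * ((L.ncard : ℝ) - p * N) ^ 2 / t ^ 2 :=
        sum_le_sum fun L _ => hpoint L
    _ = p * (1 - p) * N / t ^ 2 := by rw [← sum_div, sum_bernoulliWeight_mul_sq_sub]
    _ ≤ p * N / t ^ 2 := by gcongr; nlinarith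

theorem one_sub_inv_le_finsum_bernoulliWeight {p M : ℝ} (hp0 : 0 < p) (hp1 : p ≤ 1)
    (hM0 : 0 < M) (hM : (Fintype.card α : ℝ) ≤ M) {E : Set (Set α)}
    (hE : ∀ L : Set α, (L.ncard : ℝ) ≤ 2 * p * M → L ∈ E) :
    1 - 1 / (p * M) ≤ ∑ᶠ L ∈ E, bernoulliWeight p L := by
  have hcompl : Eᶜ ⊆ {L : Set α | p * Fintype.card α + p * M < L.ncard} := by
    intro L hL
    by_contra h
    exact hL (hE L (by simp only [Set.mem_ofPred_eq, not_lt] at h; nlinarith))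
  have htail := sum_indicator_ncard_gt_le (α := α) hp0.le hp1 (mul_pos hp0 hM0)
  rw [finsum_mem_def, finsum_eq_sum_of_fintype]
  calc 1 - 1 / (p * M) ≤ 1 - p * Fintype.card α / (p * M) ^ 2 := by
        have : p * Fintype.card α / (p * M) ^ 2 ≤ 1 / (p * M) := by
          rw [div_le_div_iff₀ (by positivity) (by positivity)]
          nlinarith
        linarith
    _ ≤ 1 - ∑ L : Set α, Eᶜ.indicator (bernoulliWeight p) L := by
        gcongr
        refine le_trans (sum_le_sum fun L _ => ?_) htail
        exact Set.indicator_le_indicator_of_subset hcompl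
          (fun L => bernoulliWeight_nonneg hp0.le hp1 L) L
    _ = ∑ L : Set α, E.indicator (bernoulliWeight p) L := by
        rw [← sum_bernoulliWeight (α := α) p, sub_eq_iff_eq_add, ← sum_add_distrib]
        exact sum_congr rfl fun L _ => (congrFun (Set.indicator_self_add_compl E _) L).symm

end Bernoulli

namespace AddSubgroup

variable {G : Type*} [AddGroup G]

theorem two_mul_card_le_card_of_lt [Finite G] {H K : AddSubgroup G} (h : H < K) :
    2 * Nat.card H ≤ Nat.card K := by
  obtain ⟨k, hk⟩ := card_dvd_of_le h.le
  have hk0 : k ≠ 0 := by rintro rfl; exact Nat.card_pos.ne' (by simpa using hk)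
  have hk1 : k ≠ 1 := by
    rintro rfl
    exact h.ne (eq_of_le_of_card_ge h.le (by rw [hk, mul_one]))
  rw [hk, mul_comm]
  exact Nat.mul_le_mul_left _ (by omega)

variable {β : Type*} (f : β → G)

theorem closure_image_lt_closure_image_insert {A : Set β} {b : β}
    (hb : f b ∉ closure (f '' A)) : closure (f '' A) < closure (f '' insert b A) :=
  SetLike.lt_iff_le_and_exists.2 ⟨closure_mono (Set.image_mono (Set.subset_insert _ _)),
    f b, subset_closure (Set.mem_image_of_mem f (Set.mem_insert _ _)), hb⟩

variable [Finite G]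

theorem two_pow_ncard_le_card_closure {A : Set β} (hA : A.Finite)
    (hirr : ∀ b ∈ A, f b ∉ closure (f '' (A \ {b}))) :
    2 ^ A.ncard ≤ Nat.card (closure (f '' A)) := by
  induction A, hA using Set.Finite.induction_on with
  | empty => simp
  | @insert b A hbA hA ih =>
    have hlt := closure_image_lt_closure_image_insert f
      (by simpa [hbA] using hirr b (Set.mem_insert _ _))
    have hirrA : ∀ b' ∈ A, f b' ∉ closure (f '' (A \ {b'})) := fun b' hb' hmem =>
      hirr b' (Set.mem_insert_of_mem _ hb')
        (closure_mono (Set.image_mono (Set.sdiff_subset_sdiff_left (Set.subset_insert _ _))) hmem)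
    rw [Set.ncard_insert_of_notMem hbA hA, pow_succ']
    exact (Nat.mul_le_mul_left 2 (ih hirrA)).trans (two_mul_card_le_card_of_lt hlt)

theorem exists_irredundant_of_maximal_card_closure [Finite β] {P : Set β → Prop} (h0 : P ∅)
    (hmono : ∀ ⦃A B⦄, A ⊆ B → P B → P A) :
    ∃ A, P A ∧ (∀ b, P (insert b A) → f b ∈ closure (f '' A)) ∧
      ∀ b ∈ A, f b ∉ closure (f '' (A \ {b})) := by
  obtain ⟨A₁, hA₁, hmax⟩ := Set.exists_max_image {A | P A}
    (fun A => Nat.card (closure (f '' A))) (Set.toFinite _) ⟨∅, h0⟩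
  obtain ⟨A, ⟨hA, hcard⟩, hmin⟩ := Set.exists_min_image
    {A | P A ∧ Nat.card (closure (f '' A₁)) ≤ Nat.card (closure (f '' A))} Set.ncard
    (Set.toFinite _) ⟨A₁, hA₁, le_rfl⟩
  refine ⟨A, hA, fun b hb => ?_, fun b hb hmem => ?_⟩
  · by_contra hnot
    have hgrow := two_mul_card_le_card_of_lt (closure_image_lt_closure_image_insert f hnot)
    have hle := (hmax _ hb).trans hcard
    have hpos : 0 < Nat.card (closure (f '' A)) := Nat.card_pos
    omega
  · have heq : closure (f '' (A \ {b})) = closure (f '' A) := by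
      refine le_antisymm (closure_mono (Set.image_mono Set.sdiff_subset)) ((closure_le _).2 ?_)
      rintro _ ⟨a, ha, rfl⟩
      by_cases hab : a = b
      · exact hab ▸ hmem
      · exact subset_closure ⟨a, ⟨ha, hab⟩, rfl⟩
    have hge := hmin (A \ {b}) ⟨hmono Set.sdiff_subset hA, heq ▸ hcard⟩
    have hlt := Set.ncard_sdiff_singleton_lt_of_mem hb (Set.toFinite A)
    omega

theorem card_le_pow_ncard_of_le_pi {α M : Type*} [AddGroup M] [Finite M] [Finite α] {L : Set α}
    {H : AddSubgroup (α → M)} (hH : H ≤ pi Lᶜ fun _ => ⊥) : Nat.card H ≤ Nat.card M ^ L.ncard := by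
  have hinj : Function.Injective fun (v : H) (a : L) => (v : α → M) a := by
    intro v w hvw
    ext a
    by_cases ha : a ∈ L
    · exact congrFun hvw ⟨a, ha⟩
    · rw [mem_bot.1 ((mem_pi _).1 (hH v.2) a ha), mem_bot.1 ((mem_pi _).1 (hH w.2) a ha)]
  rw [← Nat.card_coe_set_eq, ← Nat.card_fun]
  exact Nat.card_le_card_of_injective _ hinj

end AddSubgroup

namespace Gr

variable {F : Type} [Field F] {n s : ℕ}

theorem exists_fin_span_eq {k : ℕ} (Q : Gr F n k) :
    ∃ v : Fin k → (Fin n → F), (∀ i, v i ∈ Q.1) ∧ Submodule.span F (Set.range v) = Q.1 := by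
  let b := Module.finBasisOfFinrankEq F Q.1 Q.2
  refine ⟨fun i => b i, fun i => (b i).2, ?_⟩
  rw [Set.range_comp' Subtype.val b, ← Submodule.coe_subtype, Submodule.span_image, b.span_eq,
    Submodule.map_subtype_top]

theorem exists_between {r : ℕ} (hr : 1 ≤ r) {Q : Gr F n (r - 1)} {S : Submodule F (Fin n → F)}
    (hQS : Q.1 ≤ S) (hS : r ≤ Module.finrank F S) : ∃ R : Gr F n r, Q.1 ≤ R.1 ∧ R.1 ≤ S := by
  have hlt : Q.1 < S := lt_of_le_of_ne hQS fun h => by have := Q.2; rw [h] at this; omega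
  obtain ⟨v, hvS, hvQ⟩ := SetLike.exists_of_lt hlt
  refine ⟨⟨Q.1 ⊔ Submodule.span F {v}, ?_⟩, le_sup_left,
    sup_le hQS ((Submodule.span_singleton_le_iff_mem v S).2 hvS)⟩
  rw [Submodule.finrank_sup_span_singleton hvQ, Q.2]
  omega

theorem grIn_mono {r : ℕ} {L L' : Set (Gr F n r)} (h : L ⊆ L') :
    grIn F n s r L ⊆ grIn F n s r L' :=
  fun _ hS R hR => h (hS R hR)

theorem mem_of_le_of_mem_grIn_restr {r : ℕ} (hr : 1 ≤ r) (hrs : r ≤ s) {L : Set (Gr F n r)}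
    {B : Set (Gr F n (r - 1))} {S : Gr F n s} (hS : S ∈ grIn F n s r (restr F n r L B))
    {Q : Gr F n (r - 1)} (hQS : Q.1 ≤ S.1) : Q ∈ B := by
  obtain ⟨R, hQR, hRS⟩ := exists_between hr hQS (S.2.symm ▸ hrs)
  exact (hS R hRS).2 Q hQR

def degree {k : ℕ} (𝒮 : Set (Gr F n s)) (Q : Gr F n k) : ℕ :=
  {S | S ∈ 𝒮 ∧ Q.1 ≤ S.1}.ncard

theorem degree_insert_of_not_le {k : ℕ} (𝒮 : Set (Gr F n s)) {S : Gr F n s} {Q : Gr F n k}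
    (hQS : ¬ Q.1 ≤ S.1) : degree (insert S 𝒮) Q = degree 𝒮 Q := by
  unfold degree
  congr 1
  ext S'
  constructor
  · rintro ⟨rfl | hS', hQ⟩
    exacts [absurd hQ hQS, ⟨hS', hQ⟩]
  · exact fun ⟨hS', hQ⟩ => ⟨Set.mem_insert_of_mem _ hS', hQ⟩

theorem closure_modB_le_pi {r : ℕ} (Δ : ℕ) {L : Set (Gr F n r)} {𝒮 : Set (Gr F n s)}
    (h𝒮 : 𝒮 ⊆ grIn F n s r L) :
    AddSubgroup.closure (modB F n s r Δ '' 𝒮) ≤ AddSubgroup.pi Lᶜ fun _ => ⊥ := by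
  rw [AddSubgroup.closure_le]
  rintro _ ⟨S, hS, rfl⟩
  exact (AddSubgroup.mem_pi _).2 fun R hR =>
    AddSubgroup.mem_bot.2 (if_neg fun hRS => hR (h𝒮 hS R hRS))

variable [Fintype F]

instance (k : ℕ) : Fintype (Gr F n k) := Fintype.ofFinite _

theorem ncard_setOf_le_le_card_pow (k : ℕ) (W : Submodule F (Fin n → F)) :
    {Q : Gr F n k | Q.1 ≤ W}.ncard ≤ Nat.card W ^ k := by
  let spanOf : (Fin k → W) → Submodule F (Fin n → F) :=
    fun w => Submodule.span F (Set.range fun i => (w i : Fin n → F))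
  have hsub : Subtype.val '' {Q : Gr F n k | Q.1 ≤ W} ⊆ spanOf '' Set.univ := by
    rintro _ ⟨Q, hQW, rfl⟩
    obtain ⟨v, hvQ, hspan⟩ := exists_fin_span_eq Q
    exact ⟨fun i => ⟨v i, hQW (hvQ i)⟩, trivial, hspan⟩
  calc {Q : Gr F n k | Q.1 ≤ W}.ncard = (Subtype.val '' {Q : Gr F n k | Q.1 ≤ W}).ncard :=
        (Set.ncard_image_of_injective _ Subtype.val_injective).symm
    _ ≤ (spanOf '' Set.univ).ncard := Set.ncard_le_ncard hsub
    _ ≤ (Set.univ : Set (Fin k → W)).ncard := Set.ncard_image_le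
    _ = Nat.card W ^ k := by simp

theorem card_le_pow (k : ℕ) : Fintype.card (Gr F n k) ≤ Fintype.card F ^ (n * k) := by
  simpa [pow_mul] using ncard_setOf_le_le_card_pow (F := F) (n := n) k ⊤

theorem ncard_setOf_le_le_pow (k : ℕ) (S : Gr F n s) :
    {Q : Gr F n k | Q.1 ≤ S.1}.ncard ≤ Fintype.card F ^ (s * k) := by
  have h := ncard_setOf_le_le_card_pow k S.1
  rwa [Module.natCard_eq_pow_finrank (K := F), S.2, Nat.card_eq_fintype_card, ← pow_mul] at h

theorem degree_mono {k : ℕ} {𝒮 𝒯 : Set (Gr F n s)} (h : 𝒮 ⊆ 𝒯) (Q : Gr F n k) :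
    degree 𝒮 Q ≤ degree 𝒯 Q :=
  Set.ncard_le_ncard fun S hS => ⟨h hS.1, hS.2⟩

theorem degree_insert_le {k : ℕ} (𝒮 : Set (Gr F n s)) (S : Gr F n s) (Q : Gr F n k) :
    degree (insert S 𝒮) Q ≤ degree 𝒮 Q + 1 := by
  refine (Set.ncard_le_ncard (t := insert S {S' | S' ∈ 𝒮 ∧ Q.1 ≤ S'.1}) ?_).trans
    (Set.ncard_insert_le _ _)
  rintro S' ⟨rfl | hS', hQ⟩
  exacts [Set.mem_insert _ _, Set.mem_insert_of_mem _ ⟨hS', hQ⟩]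

theorem ncard_mul_le_ncard_mul_pow {k m : ℕ} (𝒮 : Set (Gr F n s)) {X : Set (Gr F n k)}
    (hX : ∀ Q ∈ X, m ≤ degree 𝒮 Q) :
    X.ncard * m ≤ 𝒮.ncard * Fintype.card F ^ (s * k) := by
  rw [Set.ncard_eq_toFinset_card', Set.ncard_eq_toFinset_card']
  refine Finset.card_mul_le_card_mul (fun Q S => Q.1 ≤ S.1) (fun Q hQ => ?_) (fun S _ => ?_)
  · refine (hX Q (Set.mem_toFinset.1 hQ)).trans_eq ?_
    rw [degree, Set.ncard_eq_toFinset_card', Finset.bipartiteAbove]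
    congr 1
    ext S
    simp
  · refine le_trans ?_ (ncard_setOf_le_le_pow k S)
    rw [Set.ncard_eq_toFinset_card', Finset.bipartiteBelow]
    exact Finset.card_le_card fun Q hQ => by simp_all

theorem exists_sparse_spanning {r : ℕ} (hr : 1 ≤ r) (hrs : r ≤ s) (Δ : ℕ) [NeZero Δ] (m : ℕ)
    (L : Set (Gr F n r)) :
    ∃ (𝒮 : Set (Gr F n s)) (B : Set (Gr F n (r - 1))),
      𝒮 ⊆ grIn F n s r L ∧ (∀ Q : Gr F n (r - 1), degree 𝒮 Q ≤ m) ∧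
      Bᶜ.ncard * m ≤ Δ * L.ncard * Fintype.card F ^ (s * (r - 1)) ∧
      ∀ S ∈ grIn F n s r (restr F n r L B),
        modB F n s r Δ S ∈ AddSubgroup.closure (modB F n s r Δ '' 𝒮) := by
  obtain ⟨𝒮, ⟨h𝒮L, h𝒮deg⟩, hmax, hirr⟩ :=
    AddSubgroup.exists_irredundant_of_maximal_card_closure (modB F n s r Δ)
      (P := fun 𝒮 => 𝒮 ⊆ grIn F n s r L ∧ ∀ Q : Gr F n (r - 1), degree 𝒮 Q ≤ m)
      ⟨Set.empty_subset _, fun Q => by simp [degree]⟩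
      fun 𝒮 𝒯 h h𝒯 => ⟨h.trans h𝒯.1, fun Q => (degree_mono h Q).trans (h𝒯.2 Q)⟩
  refine ⟨𝒮, {Q | degree 𝒮 Q < m}, h𝒮L, h𝒮deg, ?_, fun S hS => hmax S ⟨?_, fun Q => ?_⟩⟩
  · have hsize : 𝒮.ncard ≤ Δ * L.ncard := by
      have h := (AddSubgroup.two_pow_ncard_le_card_closure _ (Set.toFinite 𝒮) hirr).trans
        (AddSubgroup.card_le_pow_ncard_of_le_pi (closure_modB_le_pi Δ h𝒮L))
      rw [Nat.card_zmod] at h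
      refine (Nat.pow_le_pow_iff_right one_lt_two).1 (h.trans ?_)
      rw [pow_mul]
      exact Nat.pow_le_pow_left Nat.lt_two_pow_self.le _
    calc {Q | degree 𝒮 Q < m}ᶜ.ncard * m ≤ 𝒮.ncard * Fintype.card F ^ (s * (r - 1)) :=
          ncard_mul_le_ncard_mul_pow 𝒮 fun Q hQ => not_lt.1 hQ
      _ ≤ Δ * L.ncard * Fintype.card F ^ (s * (r - 1)) := Nat.mul_le_mul_right _ hsize
  · exact Set.insert_subset (grIn_mono (fun R hR => hR.1) hS) h𝒮L
  · by_cases hQS : Q.1 ≤ S.1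
    · exact (degree_insert_le 𝒮 S Q).trans (mem_of_le_of_mem_grIn_restr hr hrs hS hQS)
    · exact (degree_insert_of_not_le 𝒮 hQS).trans_le (h𝒮deg Q)

theorem exists_propP1_propP2 {r : ℕ} (hr : 1 ≤ r) (hrs : r ≤ s) (Δ : ℕ) [NeZero Δ] {p : ℝ}
    (hp : 0 ≤ p) (hD : 1 ≤ √p * (Fintype.card F : ℝ) ^ n) (L : Set (Gr F n r))
    (hL : (L.ncard : ℝ) ≤ 2 * p * (Fintype.card F : ℝ) ^ (n * r)) :
    ∃ (𝒮 : Set (Gr F n s)) (B : Set (Gr F n (r - 1))), propP1 F n s r p L 𝒮 ∧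
      propP2 F n s r (4 * (Fintype.card F : ℝ) ^ (s * (r - 1))) Δ p L 𝒮 B := by
  set q : ℝ := (Fintype.card F : ℝ)
  set D := √p * q ^ n
  obtain ⟨𝒮, B, h𝒮L, hdeg, hB, hspan⟩ := exists_sparse_spanning (s := s) hr hrs Δ ⌊D⌋₊ L
  have hD2 : D ≤ 2 * ⌊D⌋₊ := by
    have h1 := Nat.lt_floor_add_one D
    have h2 : (1 : ℝ) ≤ ⌊D⌋₊ := by exact_mod_cast (Nat.one_le_floor_iff D).2 hD
    linarith
  refine ⟨𝒮, B, ⟨h𝒮L, fun Q => ?_⟩, ⟨?_, fun S hS => ?_⟩⟩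
  · rw [← Real.sqrt_eq_rpow]
    exact (Nat.cast_le.2 (hdeg Q)).trans (Nat.floor_le (by positivity))
  · rw [← Real.sqrt_eq_rpow]
    have hqpow : q ^ (n * r) = q ^ n * q ^ ((r - 1) * n) := by
      rw [← pow_add]; congr 1; obtain ⟨k, rfl⟩ := Nat.exists_eq_add_of_le' hr; simp; ring
    have hB' : (Bᶜ.ncard : ℝ) * ⌊D⌋₊ ≤ Δ * L.ncard * q ^ (s * (r - 1)) := by
      simp only [q]; exact_mod_cast hB
    refine le_of_mul_le_mul_right ?_ (by linarith : (0 : ℝ) < D)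
    calc (Bᶜ.ncard : ℝ) * D ≤ 2 * (Δ * L.ncard * q ^ (s * (r - 1))) := by nlinarith
      _ ≤ 2 * (Δ * (2 * p * q ^ (n * r)) * q ^ (s * (r - 1))) := by gcongr
      _ = 4 * q ^ (s * (r - 1)) * Δ * √p * q ^ ((r - 1) * n) * D := by
        rw [hqpow]
        linear_combination
          -4 * Δ * q ^ n * q ^ ((r - 1) * n) * q ^ (s * (r - 1)) * Real.mul_self_sqrt hp
  · convert hspan S hS using 2
    ext v
    simp [eq_comm]

end Gr

theorem sqrt_pow_le_mul_pow {q p : ℝ} (hq : 0 < q) {n : ℕ} (hp : q ^ (-(1 / 2 * (n : ℝ))) ≤ p) :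
    √q ^ n ≤ p * q ^ n := by
  calc √q ^ n = q ^ (-(1 / 2 * (n : ℝ))) * q ^ n := by
        rw [Real.sqrt_eq_rpow, ← Real.rpow_mul_natCast hq.le, ← Real.rpow_natCast q n,
          ← Real.rpow_add hq]
        ring_nf
    _ ≤ p * q ^ n := by gcongr

theorem greedy_sparse_basis_general (q s r : ℕ) (hr : 1 ≤ r) (hrs : r < s) :
    ∃ C c : ℝ, 0 < c ∧
      ∀ (F : Type) [Field F] [Fintype F], Fintype.card F = q →
        ∀ Δ : ℕ, 1 ≤ Δ → ∀ ε : ℝ, 0 < ε →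
          ∃ n₀ : ℕ, ∀ n : ℕ, n₀ ≤ n →
            ∀ p : ℝ, (q : ℝ) ^ (-(c * (n : ℝ))) ≤ p → p ≤ c →
              1 - ε ≤ samP F n r p
                {L | ∃ (𝒮 : Set (Gr F n s)) (B : Set (Gr F n (r - 1))),
                  propP1 F n s r p L 𝒮 ∧ propP2 F n s r C Δ p L 𝒮 B} := by
  refine ⟨4 * (q : ℝ) ^ (s * (r - 1)), 1 / 2, by norm_num, ?_⟩
  intro F _ _ hF Δ hΔ ε hε
  subst hF
  have : NeZero Δ := ⟨by omega⟩
  set q : ℝ := (Fintype.card F : ℝ)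
  have hq : 1 < q := Nat.one_lt_cast.2 Fintype.one_lt_card
  have hsqrt : 1 < √q := by rwa [Real.lt_sqrt zero_le_one, one_pow]
  obtain ⟨n₀, hn₀⟩ := pow_unbounded_of_one_lt ε⁻¹ hsqrt
  refine ⟨n₀, fun n hn p hp hpc => ?_⟩
  have hp0 : 0 < p := (Real.rpow_pos_of_pos (by positivity) _).trans_le hp
  have hgrow : √q ^ n ≤ p * q ^ n := sqrt_pow_le_mul_pow (by positivity) hp
  have hD : 1 ≤ √p * q ^ n := (one_le_pow₀ hsqrt.le).trans <| hgrow.trans <| by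
    gcongr; exact Real.le_sqrt_self_iff.2 (by linarith)
  have hM : ε⁻¹ ≤ p * q ^ (n * r) := hn₀.le.trans <| (pow_le_pow_right₀ hsqrt.le hn).trans <|
    hgrow.trans <| by gcongr; exacts [hq.le, Nat.le_mul_of_pos_right n hr]
  calc 1 - ε ≤ 1 - 1 / (p * q ^ (n * r)) := by
        rw [one_div]; linarith [(inv_le_comm₀ hε (by positivity)).1 hM]
    _ ≤ _ := one_sub_inv_le_finsum_bernoulliWeight hp0 (by linarith) (by positivity)
        (by simp only [q]; exact_mod_cast Gr.card_le_pow r)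
        fun L hL => Gr.exists_propP1_propP2 hr hrs.le Δ hp0.le hD L hL

/-- **Proposition 4.6 (greedy sparse basis)**: there are `C, c > 0` depending only on `q,s`
such that for `q^{-cn} ≤ p ≤ c` and any `Δ ≥ 1`, whp `L ~ Sam(Gr_q(n,r), p)` admits
`𝒮 ⊆ Gr_q(n,s)[L]` and `B ⊆ Gr_q(n,r−1)` satisfying (P1) and (P2). -/
theorem greedy_sparse_basis (q s r : ℕ) (hq : IsPrimePow q) (hr : 1 ≤ r) (hrs : r < s) :
    ∃ C c : ℝ, 0 < c ∧
      ∀ (F : Type) [Field F] [Fintype F], Fintype.card F = q →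
        ∀ Δ : ℕ, 1 ≤ Δ → ∀ ε : ℝ, 0 < ε →
          ∃ n₀ : ℕ, ∀ n : ℕ, n₀ ≤ n →
            ∀ p : ℝ, (q : ℝ) ^ (-(c * (n : ℝ))) ≤ p → p ≤ c →
              1 - ε ≤ samP F n r p
                {L | ∃ (𝒮 : Set (Gr F n s)) (B : Set (Gr F n (r - 1))),
                  propP1 F n s r p L 𝒮 ∧ propP2 F n s r C Δ p L 𝒮 B} :=
  greedy_sparse_basis_general q s r hr hrs
end
end

section
/- Fix a prime power q and integers s > r ≥ 1. There exists a function f : {0,1,…,r} → Q, depending only on q, s and r, such that for every n ≥ r+s, every (r+s)-dimensional F_q-subspace T of F_q^n, and every r-dimensional subspace R ≤ T, one has e_R = Σ_S f(dim(S ∩ R))·∂_{s,r}e_S as vectors in Q^{Gr_q(n,r)}, where the sum ranges over all s-dimensional subspaces S ≤ T. -/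
/-!
For `R' ≤ T` the right-hand side is `∑ᵢ N(R, R', i) f(i)`, where `N(R, R', i)` counts the
`s`-dimensional `S` with `R' ≤ S ≤ T` and `dim (S ∩ R) = i`. As `GL(T)` acts transitively on pairs
of `r`-dimensional subspaces meeting in a given dimension `j`, this count depends only on
`j = dim (R ∩ R')` and can be read off one reference pair in `F^(r+s)`. The matrix `N_{j i}` is
upper triangular (`R ∩ R' ≤ S ∩ R`) with nonzero diagonal (since `s ≥ r`, `R'` extends to an `S`
meeting `R` exactly in `R ∩ R'`), so back substitution gives `f` with `∑ᵢ N_{j i} f(i) = [j = r]`;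
and `j = r` exactly when `R' = R`.
-/

open scoped Classical

noncomputable section

open Module Submodule

theorem exists_isCompl_disjoint_inf_sup_eq {α : Type*} [Lattice α] [BoundedOrder α]
    [IsModularLattice α] [ComplementedLattice α] (a b : α) :
    ∃ c d, IsCompl a c ∧ d ≤ c ∧ Disjoint (a ⊓ b) d ∧ a ⊓ b ⊔ d = b := by
  obtain ⟨d, hd, hsup⟩ := IsModularLattice.exists_disjoint_and_sup_eq (inf_le_right : a ⊓ b ≤ b)
  have had : Disjoint a d := by
    rw [disjoint_iff, ← inf_eq_right.mpr (hsup ▸ le_sup_right : d ≤ b), ← inf_assoc]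
    exact hd.eq_bot
  obtain ⟨c, hdc, hc⟩ := had.symm.exists_isCompl
  exact ⟨c, d, hc.symm, hdc, hd, hsup⟩

section Transport

variable {F V W : Type*} [Field F] [AddCommGroup V] [Module F V] [AddCommGroup W] [Module F W]

theorem exists_linearEquiv_map_sup_map {P C : Submodule F V} {P' C' : Submodule F W}
    (h : IsCompl P C) (h' : IsCompl P' C') (eP : P ≃ₗ[F] P') (eC : C ≃ₗ[F] C') :
    ∃ e : V ≃ₗ[F] W, ∀ (X : Submodule F P) (Y : Submodule F C),
      (X.map P.subtype ⊔ Y.map C.subtype).map (e : V →ₗ[F] W) =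
        (X.map (eP : P →ₗ[F] P')).map P'.subtype ⊔ (Y.map (eC : C →ₗ[F] C')).map C'.subtype := by
  let e := (prodEquivOfIsCompl P C h).symm ≪≫ₗ eP.prodCongr eC ≪≫ₗ prodEquivOfIsCompl P' C' h'
  have hP : (e : V →ₗ[F] W) ∘ₗ P.subtype = P'.subtype ∘ₗ (eP : P →ₗ[F] P') := by
    ext x; simp [e]
  have hC : (e : V →ₗ[F] W) ∘ₗ C.subtype = C'.subtype ∘ₗ (eC : C →ₗ[F] C') := by
    ext x; simp [e]
  refine ⟨e, fun X Y => ?_⟩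
  rw [Submodule.map_sup, ← map_comp, ← map_comp, hP, hC, map_comp, map_comp]

theorem finrank_comap_subtype_of_le {p q : Submodule F V} (h : q ≤ p) :
    finrank F (q.comap p.subtype) = finrank F q :=
  (comapSubtypeEquivOfLe h).finrank_eq

variable [FiniteDimensional F V] [FiniteDimensional F W]

theorem exists_linearEquiv_map_eq {p : Submodule F V} {p' : Submodule F W}
    (hV : finrank F V = finrank F W) (hp : finrank F p = finrank F p') :
    ∃ e : V ≃ₗ[F] W, p.map (e : V →ₗ[F] W) = p' := by
  obtain ⟨c, hc⟩ := p.exists_isCompl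
  obtain ⟨c', hc'⟩ := p'.exists_isCompl
  have hcc' : finrank F c = finrank F c' := by
    have := finrank_add_eq_of_isCompl hc
    have := finrank_add_eq_of_isCompl hc'
    omega
  obtain ⟨e, he⟩ := exists_linearEquiv_map_sup_map hc hc'
    (LinearEquiv.ofFinrankEq _ _ hp) (LinearEquiv.ofFinrankEq _ _ hcc')
  refine ⟨e, ?_⟩
  simpa using he ⊤ ⊥

theorem exists_linearEquiv_map_eq_map_eq {A B : Submodule F V} {A' B' : Submodule F W}
    (hV : finrank F V = finrank F W) (hA : finrank F A = finrank F A')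
    (hB : finrank F B = finrank F B') (hAB : finrank F ↥(A ⊓ B) = finrank F ↥(A' ⊓ B')) :
    ∃ e : V ≃ₗ[F] W, A.map (e : V →ₗ[F] W) = A' ∧ B.map (e : V →ₗ[F] W) = B' := by
  obtain ⟨C, D, hAC, hDC, hD, hB_eq⟩ := exists_isCompl_disjoint_inf_sup_eq A B
  obtain ⟨C', D', hAC', hDC', hD', hB_eq'⟩ := exists_isCompl_disjoint_inf_sup_eq A' B'
  have hC : finrank F C = finrank F C' := by
    have := finrank_add_eq_of_isCompl hAC
    have := finrank_add_eq_of_isCompl hAC'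
    omega
  have hDD' : finrank F D = finrank F D' := by
    have h := finrank_sup_add_finrank_inf_eq (A ⊓ B) D
    have h' := finrank_sup_add_finrank_inf_eq (A' ⊓ B') D'
    rw [hB_eq, hD.eq_bot, finrank_bot] at h
    rw [hB_eq', hD'.eq_bot, finrank_bot] at h'
    omega
  obtain ⟨eA, heA⟩ := exists_linearEquiv_map_eq (p := (A ⊓ B).comap A.subtype)
    (p' := (A' ⊓ B').comap A'.subtype) hA
    (by rwa [finrank_comap_subtype_of_le inf_le_left, finrank_comap_subtype_of_le inf_le_left])
  obtain ⟨eC, heC⟩ := exists_linearEquiv_map_eq (p := D.comap C.subtype)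
    (p' := D'.comap C'.subtype) hC
    (by rwa [finrank_comap_subtype_of_le hDC, finrank_comap_subtype_of_le hDC'])
  obtain ⟨e, he⟩ := exists_linearEquiv_map_sup_map hAC hAC' eA eC
  refine ⟨e, by simpa using he ⊤ ⊥, ?_⟩
  have := he ((A ⊓ B).comap A.subtype) (D.comap C.subtype)
  rwa [heA, heC, map_comap_subtype, map_comap_subtype, map_comap_subtype, map_comap_subtype,
    inf_of_le_right inf_le_left, inf_of_le_right hDC, inf_of_le_right inf_le_left,
    inf_of_le_right hDC', hB_eq, hB_eq'] at this

end Transport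

section IncidenceCount

variable {F V W : Type*} [Field F] [AddCommGroup V] [Module F V] [AddCommGroup W] [Module F W]

/-- Some pair of subspaces of `F^N` of dimensions `a`, `b` meeting in dimension `w` (an arbitrary
pair if there is none). -/
def refPair (F : Type*) [Field F] (N a b w : ℕ) :
    Submodule F (Fin N → F) × Submodule F (Fin N → F) :=
  Classical.epsilon fun P => finrank F P.1 = a ∧ finrank F P.2 = b ∧ finrank F ↥(P.1 ⊓ P.2) = w

theorem refPair_spec {N a b w : ℕ} (h : ∃ P : Submodule F (Fin N → F) × Submodule F (Fin N → F),
      finrank F P.1 = a ∧ finrank F P.2 = b ∧ finrank F ↥(P.1 ⊓ P.2) = w) :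
    finrank F (refPair F N a b w).1 = a ∧ finrank F (refPair F N a b w).2 = b ∧
      finrank F ↥((refPair F N a b w).1 ⊓ (refPair F N a b w).2) = w :=
  Classical.epsilon_spec h

def incidenceCount (T R R' : Submodule F V) (s i : ℕ) : ℕ :=
  Nat.card {S : Submodule F V // finrank F S = s ∧ S ≤ T ∧ R' ≤ S ∧ finrank F ↥(S ⊓ R) = i}

theorem incidenceCount_map {f : V →ₗ[F] W} (hf : Function.Injective f)
    (T R R' : Submodule F V) (s i : ℕ) :
    incidenceCount (T.map f) (R.map f) (R'.map f) s i = incidenceCount T R R' s i := by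
  have hrank (S : Submodule F V) : finrank F (S.map f) = finrank F S :=
    (equivMapOfInjective f hf S).finrank_eq.symm
  symm
  refine Nat.card_eq_of_bijective (fun S => ⟨S.1.map f, ?_⟩) ⟨fun S S' h => ?_, fun S' => ?_⟩
  · obtain ⟨hs, hT, hR', hi⟩ := S.2
    rw [hrank, ← map_inf f hf, hrank, map_le_map_iff_of_injective hf,
      map_le_map_iff_of_injective hf]
    exact ⟨hs, hT, hR', hi⟩
  · exact Subtype.ext (map_injective_of_injective hf (congrArg Subtype.val h))
  · obtain ⟨hs, hT, hR', hi⟩ := S'.2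
    have hS' : (S'.1.comap f).map f = S'.1 := by
      rw [map_comap_eq, inf_of_le_right (hT.trans LinearMap.map_le_range)]
    refine ⟨⟨S'.1.comap f, ?_⟩, Subtype.ext hS'⟩
    rw [← hrank, hS', ← hrank, map_inf f hf, hS', ← map_le_map_iff_of_injective hf, hS',
      ← map_le_map_iff_of_injective hf R', hS']
    exact ⟨hs, hT, hR', hi⟩

theorem incidenceCount_eq_top {T R R' : Submodule F V} (hR : R ≤ T) (hR' : R' ≤ T) (s i : ℕ) :
    incidenceCount T R R' s i =
      incidenceCount ⊤ (R.comap T.subtype) (R'.comap T.subtype) s i := by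
  rw [← incidenceCount_map T.injective_subtype, map_subtype_top, map_comap_subtype,
    map_comap_subtype, inf_of_le_right hR, inf_of_le_right hR']

theorem incidenceCount_pos [Finite V] {T R R' : Submodule F V} (hR : R ≤ T) (hR' : R' ≤ T)
    {s : ℕ} (hs : finrank F R' ≤ s)
    (hsT : s + finrank F ↥(R ⊔ R') ≤ finrank F T + finrank F R') :
    0 < incidenceCount T R R' s (finrank F ↥(R ⊓ R')) := by
  obtain ⟨C, hC, hsup⟩ := IsModularLattice.exists_disjoint_and_sup_eq (sup_le hR hR')
  have hCT : finrank F ↥(R ⊔ R') + finrank F C = finrank F T := by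
    have := finrank_sup_add_finrank_inf_eq (R ⊔ R') C
    rw [hsup, hC.eq_bot, finrank_bot] at this
    omega
  obtain ⟨v, hv⟩ := exists_linearIndependent_of_le_finrank (R := F) (M := C)
    (n := s - finrank F R') (by omega)
  set U := (span F (Set.range v)).map C.subtype
  have hU : finrank F U = s - finrank F R' := by
    rw [finrank_map_subtype_eq, finrank_span_eq_card hv, Fintype.card_fin]
  have hUC : U ≤ C := map_subtype_le _ _
  have hdisj : Disjoint (R ⊔ R') U := hC.mono_right hUC
  have hS : finrank F ↥(R' ⊔ U) = s := by
    have := finrank_sup_add_finrank_inf_eq R' U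
    rw [(hdisj.mono_left le_sup_right).eq_bot, finrank_bot] at this
    omega
  -- `U` meets `R ⊔ R'` trivially, so by modularity `R' ⊔ U` meets `R` only inside `R'`
  have hSR : (R' ⊔ U) ⊓ R = R ⊓ R' := by
    calc (R' ⊔ U) ⊓ R = (R' ⊔ U) ⊓ (R ⊔ R') ⊓ R := by
          rw [inf_assoc, inf_eq_right.mpr (le_sup_left : R ≤ R ⊔ R')]
      _ = R ⊓ R' := by
          rw [sup_inf_assoc_of_le U (le_sup_right : R' ≤ R ⊔ R'), hdisj.symm.eq_bot, sup_bot_eq,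
            inf_comm]
  have : Finite (Submodule F V) := Finite.of_injective _ SetLike.coe_injective
  have hST : R' ⊔ U ≤ T := sup_le hR' (hUC.trans (le_sup_right.trans hsup.le))
  exact Nat.card_pos_iff.mpr ⟨⟨⟨R' ⊔ U, hS, hST, le_sup_left, by rw [hSR]⟩⟩, inferInstance⟩

theorem finsum_eq_sum_incidenceCount {K : Type*} [Semiring K] [Finite V]
    (T R R' : Submodule F V) (s : ℕ) (g : ℕ → K) :
    ∑ᶠ S : {S : Submodule F V // finrank F S = s},
      (if S.1 ≤ T then g (finrank F ↥(S.1 ⊓ R)) * (if R' ≤ S.1 then 1 else 0) else 0) =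
    ∑ i ∈ Finset.Icc (finrank F ↥(R ⊓ R')) (finrank F R),
      (incidenceCount T R R' s i : K) * g i := by
  have : Finite (Submodule F V) := Finite.of_injective _ SetLike.coe_injective
  have : Fintype {S : Submodule F V // finrank F S = s} := Fintype.ofFinite _
  rw [finsum_eq_sum_of_fintype]
  simp only [mul_ite, mul_one, mul_zero, ← ite_and]
  rw [← Finset.sum_filter, ← Finset.sum_fiberwise_of_maps_to (g := fun S => finrank F ↥(S.1 ⊓ R))
    (t := Finset.Icc (finrank F ↥(R ⊓ R')) (finrank F R))]
  · refine Finset.sum_congr rfl fun i _ => ?_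
    rw [Finset.sum_congr rfl (fun S hS => by rw [(Finset.mem_filter.mp hS).2]), Finset.sum_const,
      nsmul_eq_mul, Finset.filter_filter, ← Fintype.card_subtype, ← Nat.card_eq_fintype_card]
    congr 2
    exact Nat.card_congr ((Equiv.subtypeSubtypeEquivSubtypeInter
      (fun S : Submodule F V => finrank F S = s)
      (fun S : Submodule F V => (S ≤ T ∧ R' ≤ S) ∧ finrank F ↥(S ⊓ R) = i)).trans
      (Equiv.subtypeEquivRight fun S => by rw [and_assoc]))
  · intro S hS
    obtain ⟨-, hR'S⟩ := (Finset.mem_filter.mp hS).2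
    exact Finset.mem_Icc.mpr ⟨finrank_mono (inf_comm R R' ▸ inf_le_inf_right R hR'S),
      finrank_mono inf_le_right⟩

def refIncidenceCount (F : Type*) [Field F] (N a b w s i : ℕ) : ℕ :=
  incidenceCount ⊤ (refPair F N a b w).1 (refPair F N a b w).2 s i

theorem incidenceCount_top_eq_refIncidenceCount [FiniteDimensional F V] (R R' : Submodule F V)
    (s i : ℕ) :
    incidenceCount ⊤ R R' s i =
      refIncidenceCount F (finrank F V) (finrank F R) (finrank F R') (finrank F ↥(R ⊓ R')) s i := by
  have hV : finrank F V = finrank F (Fin (finrank F V) → F) := (finrank_fin_fun F).symm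
  let e₀ := LinearEquiv.ofFinrankEq _ _ hV
  have hP := refPair_spec (F := F) (a := finrank F R) (b := finrank F R')
    (w := finrank F ↥(R ⊓ R')) ⟨(R.map (e₀ : V →ₗ[F] Fin (finrank F V) → F),
      R'.map (e₀ : V →ₗ[F] Fin (finrank F V) → F)), by
        rw [← Submodule.map_inf _ e₀.injective]
        simp only [LinearEquiv.finrank_map_eq, and_self]⟩
  obtain ⟨e, hR, hR'⟩ := exists_linearEquiv_map_eq_map_eq hV hP.1.symm hP.2.1.symm hP.2.2.symm
  rw [refIncidenceCount, ← hR, ← hR', ← incidenceCount_map e.injective ⊤, Submodule.map_top,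
    LinearEquiv.range]

theorem incidenceCount_eq_refIncidenceCount [FiniteDimensional F V] {T R R' : Submodule F V}
    (hR : R ≤ T) (hR' : R' ≤ T) (s i : ℕ) :
    incidenceCount T R R' s i =
      refIncidenceCount F (finrank F T) (finrank F R) (finrank F R') (finrank F ↥(R ⊓ R')) s i := by
  rw [incidenceCount_eq_top hR hR', incidenceCount_top_eq_refIncidenceCount, ← comap_inf,
    finrank_comap_subtype_of_le hR, finrank_comap_subtype_of_le hR',
    finrank_comap_subtype_of_le (inf_le_left.trans hR)]

end IncidenceCount

def backSubst {K : Type*} [Field K] (M : ℕ → ℕ → K) (r j : ℕ) : K :=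
  ((if j = r then 1 else 0) - ∑ i ∈ (Finset.Ioc j r).attach, M j i * backSubst M r i) / M j j
termination_by r - j
decreasing_by have := Finset.mem_Ioc.mp i.2; omega

theorem sum_mul_backSubst {K : Type*} [Field K] {M : ℕ → ℕ → K} {r j : ℕ} (hj : j ≤ r)
    (hM : M j j ≠ 0) :
    ∑ i ∈ Finset.Icc j r, M j i * backSubst M r i = if j = r then 1 else 0 := by
  rw [Finset.Icc_eq_cons_Ioc hj, Finset.sum_cons, backSubst,
    Finset.sum_attach (Finset.Ioc j r) fun i => M j i * backSubst M r i]
  field_simp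
  ring

theorem Submodule.finrank_inf_eq_iff {F V : Type*} [Field F] [AddCommGroup V] [Module F V]
    [FiniteDimensional F V] {p q : Submodule F V} (h : finrank F p = finrank F q) :
    finrank F ↥(p ⊓ q) = finrank F p ↔ p = q := by
  refine ⟨fun hpq => ?_, fun hpq => by rw [hpq, inf_idem]⟩
  have hle : p ≤ q := inf_eq_left.mp (eq_of_le_of_finrank_eq inf_le_left hpq)
  exact eq_of_le_of_finrank_eq hle h

theorem local_decodability_general (q s r : ℕ) (hrs : r < s) :
    ∀ (F : Type) [Field F] [Fintype F], Fintype.card F = q →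
      ∃ f : ℕ → ℚ,
        ∀ n : ℕ, r + s ≤ n →
          ∀ T : Submodule F (Fin n → F), Module.finrank F T = r + s →
            ∀ R : Submodule F (Fin n → F), R ≤ T → Module.finrank F R = r →
              ∀ R' : Gr F n r,
                (if R'.1 = R then (1 : ℚ) else 0) =
                  ∑ᶠ S : Gr F n s,
                    if S.1 ≤ T then
                      f (Module.finrank F (S.1 ⊓ R : Submodule F (Fin n → F))) *
                        (if R'.1 ≤ S.1 then 1 else 0)
                    else 0 := by
  intro F _ _ _
  let M : ℕ → ℕ → ℚ := fun j i => refIncidenceCount F (r + s) r r j s i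
  refine ⟨backSubst M r, fun n _ T hT R hRT hR R' => ?_⟩
  by_cases hR'T : R'.1 ≤ T
  · set j := finrank F ↥(R ⊓ R'.1)
    have hcount (i : ℕ) : (incidenceCount T R R'.1 s i : ℚ) = M j i := by
      rw [incidenceCount_eq_refIncidenceCount hRT hR'T, hT, hR, R'.2]
    have hdiag : M j j ≠ 0 := by
      have hdim := finrank_sup_add_finrank_inf_eq R R'.1
      have hR' := R'.2
      rw [← hcount]
      exact_mod_cast (incidenceCount_pos hRT hR'T (by omega) (by omega)).ne'
    rw [finsum_eq_sum_incidenceCount, hR]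
    simp_rw [hcount]
    have hjr := finrank_inf_eq_iff (hR.trans R'.2.symm)
    rw [hR] at hjr
    rw [sum_mul_backSubst (finrank_mono inf_le_left |>.trans hR.le) hdiag]
    exact if_congr (hjr.trans eq_comm).symm rfl rfl
  · rw [if_neg fun h => hR'T (h.le.trans hRT), finsum_eq_zero_of_forall_eq_zero]
    intro S
    by_cases hST : S.1 ≤ T
    · rw [if_pos hST, if_neg fun h => hR'T (h.trans hST), mul_zero]
    · rw [if_neg hST]

/-- **Local decodability with symmetric coefficients** (from the proof of Lemma 5.1): there is
`f : {0,…,r} → ℚ` depending only on `q,s,r` such that for every `n ≥ r+s`, every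
`(r+s)`-dimensional subspace `T` of `F^n` and every `r`-dimensional `R ≤ T`,
`e_R = Σ_{S ≤ T, dim S = s} f(dim(S ∩ R)) ∂_{s,r} e_S` in `ℚ^{Gr_q(n,r)}`. -/
theorem local_decodability (q s r : ℕ) (hq : IsPrimePow q) (hr : 1 ≤ r) (hrs : r < s) :
    ∀ (F : Type) [Field F] [Fintype F], Fintype.card F = q →
      ∃ f : ℕ → ℚ,
        ∀ n : ℕ, r + s ≤ n →
          ∀ T : Submodule F (Fin n → F), Module.finrank F T = r + s →
            ∀ R : Submodule F (Fin n → F), R ≤ T → Module.finrank F R = r →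
              ∀ R' : Gr F n r,
                (if R'.1 = R then (1 : ℚ) else 0) =
                  ∑ᶠ S : Gr F n s,
                    if S.1 ≤ T then
                      f (Module.finrank F (S.1 ⊓ R : Submodule F (Fin n → F))) *
                        (if R'.1 ≤ S.1 then 1 else 0)
                    else 0 :=
  local_decodability_general q s r hrs
end
end

section
/- Fix a prime power q and integers s > r ≥ 1 and u ≥ 1. There exists d₀ depending only on r such that the following holds for every d ≥ d₀. Let ℓ, m ≥ 1, let L = F_{q^ℓ} ⊆ K = F_{q^{ℓm}} be finite fields, and let N ∈ L^{s×r} and x* ∈ L^{s×u} be jointly F_q-generic of degree d. Let w' ∈ K^r and w ∈ K^u be such that the r+u coordinates of (w', w) are linearly independent over L. Define P_out = {span_{F_q}(Nw' + (Nx + x*)w) : x ∈ L^{r×u}} and P_in = {span_{F_q}(Nw' + Nxw) : x ∈ L^{r×u}}. Then: (1) for every x ∈ L^{r×u}, the r coordinates of w' + xw ∈ K^r are linearly independent over L; (2) for distinct x, x' ∈ L^{r×u}, the corresponding members of P_out are distinct (likewise for P_in), and every member of P_out and of P_in has F_q-dimension s; (3) for distinct P, P' ∈ P_out one has dim_{F_q}(P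 ∩ P') < r, and likewise for distinct P, P' ∈ P_in; (4) for P ∈ P_out and P' ∈ P_in one has dim_{F_q}(P ∩ P') ≤ r; (5) Σ_{P∈P_out} Σ_{R ≤ P, dim_{F_q}R = r} e_R = Σ_{P∈P_in} Σ_{R ≤ P, dim_{F_q}R = r} e_R as formal integer sums over the r-dimensional F_q-subspaces of K. -/
open scoped Classical

noncomputable section

/-- A family `a : ι → E` of elements of the `F`-algebra `E` is `F`-generic of degree `d` if no
nonzero polynomial over `F` in the variables `ι` of total degree at most `d` vanishes at `a`. -/
def IsGeneric (F : Type) [Field F] (E : Type) [CommRing E] [Algebra F E]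
    {ι : Type} (d : ℕ) (a : ι → E) : Prop :=
  ∀ P : MvPolynomial ι F, P ≠ 0 → P.totalDegree ≤ d → MvPolynomial.aeval a P ≠ 0

/-- The vector `Nw' + (Nx + x*)w ∈ K^s` defining a member of the out-flip. -/
def outVec (L K : Type) [Field L] [Field K] [Algebra L K] (s r u : ℕ)
    (N : Matrix (Fin s) (Fin r) L) (xs : Matrix (Fin s) (Fin u) L)
    (w' : Fin r → K) (w : Fin u → K) (x : Matrix (Fin r) (Fin u) L) : Fin s → K :=
  Matrix.mulVec (N.map (algebraMap L K)) w' +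
    Matrix.mulVec
      (N.map (algebraMap L K) * x.map (algebraMap L K) + xs.map (algebraMap L K)) w

/-- The vector `Nw' + Nxw ∈ K^s` defining a member of the in-flip. -/
def inVec (L K : Type) [Field L] [Field K] [Algebra L K] (s r u : ℕ)
    (N : Matrix (Fin s) (Fin r) L)
    (w' : Fin r → K) (w : Fin u → K) (x : Matrix (Fin r) (Fin u) L) : Fin s → K :=
  Matrix.mulVec (N.map (algebraMap L K)) w' +
    Matrix.mulVec (N.map (algebraMap L K) * x.map (algebraMap L K)) w

/-- `span_{F_q}(Nw' + (Nx + x*)w)`, the `F`-span in `K` of the `s` coordinates. -/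
def spanOut (F L K : Type) [Field F] [Field L] [Field K] [Algebra F K] [Algebra L K]
    (s r u : ℕ) (N : Matrix (Fin s) (Fin r) L) (xs : Matrix (Fin s) (Fin u) L)
    (w' : Fin r → K) (w : Fin u → K) (x : Matrix (Fin r) (Fin u) L) : Submodule F K :=
  Submodule.span F (Set.range (outVec L K s r u N xs w' w x))

/-- `span_{F_q}(Nw' + Nxw)`, the `F`-span in `K` of the `s` coordinates. -/
def spanIn (F L K : Type) [Field F] [Field L] [Field K] [Algebra F K] [Algebra L K]
    (s r u : ℕ) (N : Matrix (Fin s) (Fin r) L)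
    (w' : Fin r → K) (w : Fin u → K) (x : Matrix (Fin r) (Fin u) L) : Submodule F K :=
  Submodule.span F (Set.range (inVec L K s r u N w' w x))

open Matrix Module

/-!
For `c ∈ F^s` put `φ_A c = ∑ₖ cₖ (N w' + A w)ₖ`. As the coordinates of `(w', w)` are
`L`-independent, `φ_A c` determines `(cᵀN, cᵀA)`; as a generic `N` has `F`-independent rows,
`cᵀN` determines `c`. Hence `range φ_A ⊓ range φ_{A'}` is the image of `{c | cᵀ(A - A') = 0}`.

Genericity of degree `r + 1` makes `C N` and `C [N | x*_{·j}]` nonsingular for every `C` with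
`F`-independent rows: their determinants are values of nonzero polynomials of degree `≤ r + 1`
in the entries. For `A - A' = N y` with `y ≠ 0` this bounds the dimension of the kernel above
by `r - 1`, and for `A - A' = N y + x*` by `r`. If `R ≤ range φ_A` has dimension `r` and its
preimage is spanned by the rows of `C`, then `R ≤ range φ_{N y + B}` as soon as
`C N y = C (A - B)`, which is solvable. So each `R` lies in at most one member of each flip,
and it lies in a member of `P_out` iff it lies in a member of `P_in`.
-/

theorem IsGeneric.comp_injective {F L : Type} [Field F] [CommRing L] [Algebra F L] {d : ℕ}
    {ι κ : Type} {a : ι → L} (ha : IsGeneric F L d a) {g : κ → ι}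
    (hg : Function.Injective g) : IsGeneric F L d (a ∘ g) := by
  intro P hP hdeg
  rw [← MvPolynomial.aeval_rename]
  exact ha _ ((map_ne_zero_iff _ (MvPolynomial.rename_injective g hg)).mpr hP)
    ((MvPolynomial.totalDegree_rename_le g P).trans hdeg)

theorem MvPolynomial.IsHomogeneous.det {σ ι R : Type*} [CommRing R] [Fintype ι] [DecidableEq ι]
    {M : Matrix ι ι (MvPolynomial σ R)} (hM : ∀ i j, (M i j).IsHomogeneous 1) :
    M.det.IsHomogeneous (Fintype.card ι) := by
  rw [Matrix.det_apply']
  refine IsHomogeneous.sum _ _ _ fun τ _ => ?_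
  have := (isHomogeneous_C σ ((Equiv.Perm.sign τ : ℤ) : R)).mul
    (IsHomogeneous.prod Finset.univ _ (fun _ => 1) fun i _ => hM (τ i) i)
  rw [map_intCast] at this
  simpa using this

theorem Matrix.exists_mul_eq_one_of_linearIndependent_row {m n K : Type*} [Field K] [Fintype m]
    [Fintype n] [DecidableEq m] {C : Matrix m n K} (hC : LinearIndependent K C.row) :
    ∃ B : Matrix n m K, C * B = 1 := by
  refine mulVec_surjective_iff_exists_right_inverse.mp fun y => ?_
  have hrange : LinearMap.range C.mulVecLin = ⊤ := by
    apply Submodule.eq_top_of_finrank_eq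
    rw [← Matrix.rank, hC.rank_matrix, Module.finrank_fintype_fun_eq_card]
  exact LinearMap.range_eq_top.mp hrange y

section GenericMatrix

variable {F L : Type} [Field F] [CommRing L] [Algebra F L] {σ ι : Type} [Fintype σ] [Fintype ι]
  [DecidableEq ι]

theorem Matrix.aeval_det_map_C_mul_mvPolynomialX {S : Type} [CommRing S] [Algebra F S]
    (C : Matrix ι σ F) (A : Matrix σ ι S) :
    MvPolynomial.aeval (fun p : σ × ι => A p.1 p.2)
        (C.map (MvPolynomial.C : F →+* MvPolynomial (σ × ι) F) * mvPolynomialX σ ι F).det =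
      (C.map (algebraMap F S) * A).det := by
  have := (MvPolynomial.aeval fun p : σ × ι => A p.1 p.2).map_det
    (C.map (MvPolynomial.C : F →+* MvPolynomial (σ × ι) F) * mvPolynomialX σ ι F)
  rw [this, AlgHom.mapMatrix_apply, Matrix.map_mul]
  congr 2
  · ext
    simp
  · exact mvPolynomialX_map_eval₂ _ A

theorem IsGeneric.det_map_mul_ne_zero {d : ℕ} {A : Matrix σ ι L}
    (hA : IsGeneric F L d (fun p : σ × ι => A p.1 p.2)) (hd : Fintype.card ι ≤ d)
    {C : Matrix ι σ F} (hC : LinearIndependent F C.row) :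
    (C.map (algebraMap F L) * A).det ≠ 0 := by
  set Q := (C.map (MvPolynomial.C : F →+* MvPolynomial (σ × ι) F) * mvPolynomialX σ ι F).det
  obtain ⟨B, hB⟩ := exists_mul_eq_one_of_linearIndependent_row hC
  have hQ : Q ≠ 0 := fun h => by
    simpa [Q, h, hB] using aeval_det_map_C_mul_mvPolynomialX C B
  have hhom : Q.IsHomogeneous (Fintype.card ι) := MvPolynomial.IsHomogeneous.det fun t i => by
    simp only [Matrix.mul_apply, Matrix.map_apply, mvPolynomialX_apply]
    exact MvPolynomial.IsHomogeneous.sum _ _ _ fun k _ => MvPolynomial.isHomogeneous_C_mul_X _ _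
  rw [← aeval_det_map_C_mul_mvPolynomialX]
  exact hA Q hQ (hhom.totalDegree_le.trans hd)

end GenericMatrix

section VecMulBase

variable (F : Type) {L : Type} [CommSemiring F] [CommSemiring L] [Algebra F L] {σ ι : Type}
  [Fintype σ]

/-- `c ↦ cᵀ M` for coefficient vectors `c` over the subring `F`. -/
def Matrix.vecMulBase (M : Matrix σ ι L) : (σ → F) →ₗ[F] ι → L :=
  (M.vecMulLinear.restrictScalars F).comp ((Algebra.linearMap F L).compLeft σ)

variable {F}

@[simp]
theorem Matrix.vecMulBase_apply (M : Matrix σ ι L) (c : σ → F) :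
    M.vecMulBase F c = (algebraMap F L ∘ c) ᵥ* M :=
  rfl

theorem Matrix.vecMulBase_sub {L : Type} [CommRing L] [Algebra F L] (M M' : Matrix σ ι L) :
    (M - M').vecMulBase F = M.vecMulBase F - M'.vecMulBase F :=
  LinearMap.ext fun _ => vecMul_sub _ _ _

theorem Matrix.map_mul_apply_eq_vecMulBase {τ : Type} (C : Matrix τ σ F) (M : Matrix σ ι L)
    (t : τ) : (C.map (algebraMap F L) * M) t = M.vecMulBase F (C t) :=
  rfl

theorem Matrix.vecMulBase_fromCols {ι' : Type} (M : Matrix σ ι L) (M' : Matrix σ ι' L)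
    (c : σ → F) :
    (fromCols M M').vecMulBase F c = Sum.elim (M.vecMulBase F c) (M'.vecMulBase F c) :=
  vecMul_fromCols _ _ _

end VecMulBase

theorem Fintype.linearCombination_mulVec_map {F L K : Type} [Field F] [Field L] [Field K]
    [Algebra F L] [Algebra L K] [Algebra F K] [IsScalarTower F L K] {σ ι : Type} [Fintype σ]
    [Fintype ι] (M : Matrix σ ι L) (ω : ι → K) (c : σ → F) :
    Fintype.linearCombination F (M.map (algebraMap L K) *ᵥ ω) c =
      Fintype.linearCombination L ω (M.vecMulBase F c) := by
  simp only [Fintype.linearCombination_apply, Algebra.smul_def,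
    IsScalarTower.algebraMap_apply F L K]
  change (algebraMap L K ∘ algebraMap F L ∘ c) ⬝ᵥ (M.map (algebraMap L K) *ᵥ ω) =
    (algebraMap L K ∘ ((algebraMap F L ∘ c) ᵥ* M)) ⬝ᵥ ω
  rw [dotProduct_mulVec]
  congr 1
  funext j
  exact (RingHom.map_vecMul _ _ _ j).symm

section Flip

variable {F L K : Type} [Field F] [Field L] [Field K] [Algebra L K] [Algebra F K]
  {σ ρ ι : Type} [Fintype σ] [Fintype ρ] [Fintype ι]
  {N : Matrix σ ρ L} {w' : ρ → K} {w : ι → K}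

variable (N w' w) in
/-- `N w' + A w`; the members of `P_out` and `P_in` are the `F`-spans of its coordinates for
`A = N x + x*` and `A = N x`. -/
def flipVec (A : Matrix σ ι L) : σ → K :=
  N.map (algebraMap L K) *ᵥ w' + A.map (algebraMap L K) *ᵥ w

variable (F N w' w) in
def flipSpan (A : Matrix σ ι L) : Submodule F K :=
  Submodule.span F (Set.range (flipVec N w' w A))

theorem flipSpan_eq_range (A : Matrix σ ι L) :
    flipSpan F N w' w A = LinearMap.range (Fintype.linearCombination F (flipVec N w' w A)) :=
  (Fintype.range_linearCombination F _).symm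

variable [Algebra F L] [IsScalarTower F L K]

variable (F) in
theorem linearCombination_flipVec (A : Matrix σ ι L) (c : σ → F) :
    Fintype.linearCombination F (flipVec N w' w A) c =
      Fintype.linearCombination L (Sum.elim w' w)
        (Sum.elim (N.vecMulBase F c) (A.vecMulBase F c)) := by
  rw [flipVec, ← fromCols_mulVec_sumElim, ← fromCols_map, Fintype.linearCombination_mulVec_map,
    vecMulBase_fromCols]

theorem linearCombination_flipVec_eq_iff (hω : LinearIndependent L (Sum.elim w' w))
    {A A' : Matrix σ ι L} {c c' : σ → F} :
    Fintype.linearCombination F (flipVec N w' w A) c =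
        Fintype.linearCombination F (flipVec N w' w A') c' ↔
      N.vecMulBase F c = N.vecMulBase F c' ∧ A.vecMulBase F c = A'.vecMulBase F c' := by
  rw [linearCombination_flipVec, linearCombination_flipVec,
    (linearIndependent_iff_injective_fintypeLinearCombination.mp hω).eq_iff]
  simp only [funext_iff, Sum.forall, Sum.elim_inl, Sum.elim_inr]

theorem linearIndependent_flipVec (hω : LinearIndependent L (Sum.elim w' w))
    (hN : LinearMap.ker (N.vecMulBase F) = ⊥) (A : Matrix σ ι L) :
    LinearIndependent F (flipVec N w' w A) :=
  linearIndependent_iff_injective_fintypeLinearCombination.mpr fun _ _ h =>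
    LinearMap.ker_eq_bot.mp hN ((linearCombination_flipVec_eq_iff hω).mp h).1

theorem flipSpan_inf_le_map_ker (hω : LinearIndependent L (Sum.elim w' w))
    (hN : LinearMap.ker (N.vecMulBase F) = ⊥) (A A' : Matrix σ ι L) :
    flipSpan F N w' w A ⊓ flipSpan F N w' w A' ≤
      (LinearMap.ker ((A - A').vecMulBase F)).map
        (Fintype.linearCombination F (flipVec N w' w A)) := by
  rintro z ⟨hz, hz'⟩
  rw [SetLike.mem_coe, flipSpan_eq_range] at hz hz'
  obtain ⟨c, rfl⟩ := hz
  obtain ⟨c', hc'⟩ := hz'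
  obtain ⟨hNc, hAc⟩ := (linearCombination_flipVec_eq_iff hω).mp hc'.symm
  have hcc' : c = c' := LinearMap.ker_eq_bot.mp hN hNc
  subst hcc'
  exact ⟨c, by simp [vecMulBase_sub, hAc], rfl⟩

theorem finrank_flipSpan_inf_le (hω : LinearIndependent L (Sum.elim w' w))
    (hN : LinearMap.ker (N.vecMulBase F) = ⊥) (A A' : Matrix σ ι L) :
    finrank F ↥(flipSpan F N w' w A ⊓ flipSpan F N w' w A') ≤
      finrank F (LinearMap.ker ((A - A').vecMulBase F)) :=
  (Submodule.finrank_mono (flipSpan_inf_le_map_ker hω hN A A')).trans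
    (Submodule.finrank_map_le _ _)

theorem map_le_flipSpan {A A' : Matrix σ ι L} {W : Submodule F (σ → F)}
    (hW : W ≤ LinearMap.ker ((A - A').vecMulBase F)) :
    W.map (Fintype.linearCombination F (flipVec N w' w A)) ≤ flipSpan F N w' w A' := by
  rintro _ ⟨c, hc, rfl⟩
  have hAc : A.vecMulBase F c = A'.vecMulBase F c := by
    simpa [vecMulBase_sub, sub_eq_zero] using hW hc
  rw [flipSpan_eq_range]
  exact ⟨c, by rw [linearCombination_flipVec, linearCombination_flipVec, hAc]⟩

end Flip

section GenericRows

variable {F L : Type} [Field F] [Field L] [Algebra F L] {σ ι : Type} [Fintype σ]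
  {r d : ℕ} {N : Matrix σ (Fin r) L}

theorem IsGeneric.ker_vecMulBase_eq_bot (hN : IsGeneric F L d fun p : σ × Fin r => N p.1 p.2)
    (hr : 0 < r) (hd : 1 ≤ d) : LinearMap.ker (N.vecMulBase F) = ⊥ := by
  refine LinearMap.ker_eq_bot'.mpr fun c hc => ?_
  by_contra hne
  let A : Matrix σ (Fin 1) L := Matrix.of fun k _ => N k ⟨0, hr⟩
  have hA : IsGeneric F L d fun p : σ × Fin 1 => A p.1 p.2 :=
    (hN.comp_injective (g := fun p : σ × Fin 1 => (p.1, (⟨0, hr⟩ : Fin r)))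
      fun p q h => Prod.ext (Prod.ext_iff.mp h).1 (Subsingleton.elim _ _) :)
  refine hA.det_map_mul_ne_zero (by simpa using hd) (C := Matrix.of fun _ => c)
    (linearIndependent_unique_iff.mpr hne) ?_
  rw [det_unique, map_mul_apply_eq_vecMulBase]
  exact congr_fun hc ⟨0, hr⟩

theorem IsGeneric.finrank_ker_vecMulBase_mul_lt
    (hN : IsGeneric F L d fun p : σ × Fin r => N p.1 p.2) (hd : r ≤ d)
    {y : Matrix (Fin r) ι L} (hy : y ≠ 0) :
    finrank F (LinearMap.ker ((N * y).vecMulBase F)) < r := by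
  by_contra! h
  obtain ⟨c, hc⟩ := exists_linearIndependent_of_le_finrank h
  let C : Matrix (Fin r) σ F := Matrix.of fun t => (c t : σ → F)
  have hM : IsUnit (C.map (algebraMap F L) * N).det :=
    (hN.det_map_mul_ne_zero (by simpa using hd) (hc.map' _ (Submodule.ker_subtype _))).isUnit
  have h0 : C.map (algebraMap F L) * N * y = 0 := by
    ext t j
    rw [Matrix.mul_assoc, map_mul_apply_eq_vecMulBase]
    exact congr_fun (c t).2 j
  apply hy
  rw [← nonsing_inv_mul_cancel_left _ y hM, h0, Matrix.mul_zero]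

theorem IsGeneric.finrank_ker_vecMulBase_mul_add_le [Nonempty ι] {xs : Matrix σ ι L}
    (hgen : IsGeneric F L d
      (Sum.elim (fun p : σ × Fin r => N p.1 p.2) (fun p : σ × ι => xs p.1 p.2)))
    (hd : r + 1 ≤ d) (y : Matrix (Fin r) ι L) :
    finrank F (LinearMap.ker ((N * y + xs).vecMulBase F)) ≤ r := by
  obtain ⟨j⟩ := ‹Nonempty ι›
  by_contra! h
  obtain ⟨c, hc⟩ := exists_linearIndependent_of_le_finrank h
  let A : Matrix σ (Fin r ⊕ Fin 1) L := fromCols N (Matrix.of fun k _ => xs k j)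
  let g : σ × (Fin r ⊕ Fin 1) → (σ × Fin r) ⊕ (σ × ι) :=
    fun p => p.2.elim (fun i => .inl (p.1, i)) fun _ => .inr (p.1, j)
  have hg : Function.Injective g := by
    rintro ⟨k, i | i⟩ ⟨k', i' | i'⟩ h <;> simp_all [g, Fin.fin_one_eq_zero]
  have hA : IsGeneric F L d fun p : σ × (Fin r ⊕ Fin 1) => A p.1 p.2 := by
    convert hgen.comp_injective hg using 1
    ext ⟨k, i | i⟩ <;> rfl
  refine hA.det_map_mul_ne_zero (by simpa using hd)
    (C := Matrix.of fun t => (c (finSumFinEquiv t) : σ → F))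
    ((hc.map' _ (Submodule.ker_subtype _)).comp _ finSumFinEquiv.injective) ?_
  rw [← exists_mulVec_eq_zero_iff]
  refine ⟨Sum.elim (fun i => y i j) 1, fun h0 => one_ne_zero (congr_fun h0 (.inr 0)), ?_⟩
  have hAv : A *ᵥ Sum.elim (fun i => y i j) 1 = fun k => (N * y + xs) k j := by
    ext k
    simp [A, mulVec, dotProduct, mul_apply]
  ext t
  rw [← mulVec_mulVec, hAv]
  exact congr_fun (c (finSumFinEquiv t)).2 j

theorem IsGeneric.exists_le_ker_vecMulBase_sub_mul
    (hN : IsGeneric F L d fun p : σ × Fin r => N p.1 p.2) (hd : r ≤ d)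
    {W : Submodule F (σ → F)} (hW : finrank F W = r) (D : Matrix σ ι L) :
    ∃ y : Matrix (Fin r) ι L, W ≤ LinearMap.ker ((D - N * y).vecMulBase F) := by
  let b := Module.finBasisOfFinrankEq F W hW
  let C : Matrix (Fin r) σ L := (Matrix.of fun t => (b t : σ → F)).map (algebraMap F L)
  have hM : IsUnit (C * N).det :=
    (hN.det_map_mul_ne_zero (by simpa using hd)
      (b.linearIndependent.map' _ (Submodule.ker_subtype _))).isUnit
  refine ⟨(C * N)⁻¹ * (C * D), fun c hc => ?_⟩
  have hCD : C * (D - N * ((C * N)⁻¹ * (C * D))) = 0 := by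
    rw [Matrix.mul_sub, ← Matrix.mul_assoc, mul_nonsing_inv_cancel_left _ _ hM, sub_self]
  have hzero : ((D - N * ((C * N)⁻¹ * (C * D))).vecMulBase F).comp W.subtype = 0 :=
    b.ext fun t => congr_fun hCD t
  exact LinearMap.congr_fun hzero ⟨c, hc⟩

end GenericRows

theorem exists_le_flipSpan_mul_add {F L K : Type} [Field F] [Field L] [Field K] [Algebra F L]
    [Algebra L K] [Algebra F K] [IsScalarTower F L K] {σ ι : Type} [Fintype σ] [Fintype ι]
    {r d : ℕ} {N : Matrix σ (Fin r) L} {w' : Fin r → K} {w : ι → K}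
    (hN : IsGeneric F L d fun p : σ × Fin r => N p.1 p.2) (hd : r ≤ d)
    (hω : LinearIndependent L (Sum.elim w' w)) (hNker : LinearMap.ker (N.vecMulBase F) = ⊥)
    {R : Submodule F K} (hR : finrank F R = r) {A : Matrix σ ι L}
    (hRA : R ≤ flipSpan F N w' w A) (B : Matrix σ ι L) :
    ∃ y : Matrix (Fin r) ι L, R ≤ flipSpan F N w' w (N * y + B) := by
  set φ := Fintype.linearCombination F (flipVec N w' w A)
  have hφ : Function.Injective φ :=
    linearIndependent_iff_injective_fintypeLinearCombination.mp
      (linearIndependent_flipVec hω hNker A)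
  have hRφ : (R.comap φ).map φ = R :=
    Submodule.map_comap_eq_of_le (by rwa [← flipSpan_eq_range])
  have hW : finrank F (R.comap φ) = r :=
    (Submodule.equivMapOfInjective φ hφ _).finrank_eq.trans (hRφ.symm ▸ hR)
  obtain ⟨y, hy⟩ := hN.exists_le_ker_vecMulBase_sub_mul hd hW (A - B)
  refine ⟨y, hRφ ▸ map_le_flipSpan ?_⟩
  rwa [sub_add_eq_sub_sub_swap]

section FamilyOfSubspaces

variable {F V : Type} [Field F] [AddCommGroup V] [Module F V] {r : ℕ}

theorem Submodule.injective_of_pairwise_finrank_inf_lt {α : Type} {P : α → Submodule F V}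
    {s : ℕ} (hP : Pairwise fun x y => finrank F ↥(P x ⊓ P y) < r)
    (hdim : ∀ x, finrank F (P x) = s) (hrs : r < s) : Function.Injective P := by
  intro x y hxy
  by_contra hne
  have : finrank F ↥(P x ⊓ P y) < r := hP hne
  rw [hxy, inf_idem, hdim] at this
  omega

theorem Submodule.subsingleton_setOf_le [FiniteDimensional F V] {S : Set (Submodule F V)}
    {R : Submodule F V} (hS : S.Pairwise fun P P' => finrank F ↥(P ⊓ P') < finrank F R) :
    {P | P ∈ S ∧ R ≤ P}.Subsingleton := fun _ hP _ hP' =>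
  by_contra fun hne => (hS hP.1 hP'.1 hne).not_ge (Submodule.finrank_mono (le_inf hP.2 hP'.2))

theorem Set.Subsingleton.ncard_eq_of_nonempty_iff {α : Type} {S T : Set α} (hS : S.Subsingleton)
    (hT : T.Subsingleton) (h : S.Nonempty ↔ T.Nonempty) : S.ncard = T.ncard := by
  rcases hS.eq_empty_or_singleton with rfl | ⟨a, rfl⟩ <;>
    rcases hT.eq_empty_or_singleton with rfl | ⟨b, rfl⟩ <;> simp_all

theorem Submodule.ncard_setOf_le_eq [FiniteDimensional F V] {S T : Set (Submodule F V)}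
    {R : Submodule F V} (hR : finrank F R = r)
    (hS : S.Pairwise fun P P' => finrank F ↥(P ⊓ P') < r)
    (hT : T.Pairwise fun Q Q' => finrank F ↥(Q ⊓ Q') < r)
    (h : (∃ P ∈ S, R ≤ P) ↔ ∃ Q ∈ T, R ≤ Q) :
    {P | P ∈ S ∧ R ≤ P}.ncard = {Q | Q ∈ T ∧ R ≤ Q}.ncard := by
  subst hR
  exact (subsingleton_setOf_le hS).ncard_eq_of_nonempty_iff (subsingleton_setOf_le hT) h

end FamilyOfSubspaces

section Absorber

variable {F L K : Type} [Field F] [Field L] [Field K] [Algebra L K] [Algebra F K]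
  {s r u d : ℕ} {N : Matrix (Fin s) (Fin r) L} {xs : Matrix (Fin s) (Fin u) L}
  {w' : Fin r → K} {w : Fin u → K}

theorem spanOut_eq (x : Matrix (Fin r) (Fin u) L) :
    spanOut F L K s r u N xs w' w x = flipSpan F N w' w (N * x + xs) := by
  rw [spanOut, flipSpan, outVec, flipVec, Matrix.map_add _ (map_add _), Matrix.map_mul]

theorem spanIn_eq (x : Matrix (Fin r) (Fin u) L) :
    spanIn F L K s r u N w' w x = flipSpan F N w' w (N * x) := by
  rw [spanIn, flipSpan, inVec, flipVec, Matrix.map_mul]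

theorem linearIndependent_add_mulVec_map (hω : LinearIndependent L (Sum.elim w' w))
    (x : Matrix (Fin r) (Fin u) L) :
    LinearIndependent L fun i => w' i + (x.map (algebraMap L K) *ᵥ w) i := by
  have h1 : LinearMap.ker ((1 : Matrix (Fin r) (Fin r) L).vecMulBase L) = ⊥ :=
    LinearMap.ker_eq_bot'.mpr fun c hc => by simpa using hc
  have := linearIndependent_flipVec hω h1 x
  simp only [flipVec, Matrix.map_one _ (map_zero _) (map_one _), one_mulVec] at this
  exact this

variable [Algebra F L] [IsScalarTower F L K]

theorem pairwise_finrank_flipSpan_mul_add_inf_lt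
    (hN : IsGeneric F L d fun p : Fin s × Fin r => N p.1 p.2) (hd : r ≤ d)
    (hω : LinearIndependent L (Sum.elim w' w)) (hNker : LinearMap.ker (N.vecMulBase F) = ⊥)
    (B : Matrix (Fin s) (Fin u) L) :
    Pairwise fun x x' : Matrix (Fin r) (Fin u) L =>
      finrank F ↥(flipSpan F N w' w (N * x + B) ⊓ flipSpan F N w' w (N * x' + B)) < r :=
  fun x x' hne => (finrank_flipSpan_inf_le hω hNker _ _).trans_lt <| by
    rw [add_sub_add_right_eq_sub, ← Matrix.mul_sub]
    exact hN.finrank_ker_vecMulBase_mul_lt hd (sub_ne_zero.mpr hne)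

theorem pairwise_finrank_spanOut_inf_lt
    (hN : IsGeneric F L d fun p : Fin s × Fin r => N p.1 p.2) (hd : r ≤ d)
    (hω : LinearIndependent L (Sum.elim w' w)) (hNker : LinearMap.ker (N.vecMulBase F) = ⊥) :
    Pairwise fun x x' =>
      finrank F ↥(spanOut F L K s r u N xs w' w x ⊓ spanOut F L K s r u N xs w' w x') < r :=
  fun x x' hne => by
    dsimp only
    rw [spanOut_eq, spanOut_eq]
    exact pairwise_finrank_flipSpan_mul_add_inf_lt hN hd hω hNker xs hne

theorem pairwise_finrank_spanIn_inf_lt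
    (hN : IsGeneric F L d fun p : Fin s × Fin r => N p.1 p.2) (hd : r ≤ d)
    (hω : LinearIndependent L (Sum.elim w' w)) (hNker : LinearMap.ker (N.vecMulBase F) = ⊥) :
    Pairwise fun x x' =>
      finrank F ↥(spanIn F L K s r u N w' w x ⊓ spanIn F L K s r u N w' w x') < r :=
  fun x x' hne => by
    dsimp only
    rw [spanIn_eq, spanIn_eq, ← add_zero (N * x), ← add_zero (N * x')]
    exact pairwise_finrank_flipSpan_mul_add_inf_lt hN hd hω hNker 0 hne

theorem finrank_spanOut_inf_spanIn_le
    (hgen : IsGeneric F L d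
      (Sum.elim (fun p : Fin s × Fin r => N p.1 p.2) (fun p : Fin s × Fin u => xs p.1 p.2)))
    (hd : r + 1 ≤ d) (hu : 0 < u) (hω : LinearIndependent L (Sum.elim w' w))
    (hNker : LinearMap.ker (N.vecMulBase F) = ⊥) (x x' : Matrix (Fin r) (Fin u) L) :
    finrank F ↥(spanOut F L K s r u N xs w' w x ⊓ spanIn F L K s r u N w' w x') ≤ r := by
  have : Nonempty (Fin u) := ⟨⟨0, hu⟩⟩
  rw [spanOut_eq, spanIn_eq]
  refine (finrank_flipSpan_inf_le hω hNker _ _).trans ?_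
  rw [add_sub_right_comm, ← Matrix.mul_sub]
  exact hgen.finrank_ker_vecMulBase_mul_add_le hd _

theorem exists_le_spanOut_iff_exists_le_spanIn
    (hN : IsGeneric F L d fun p : Fin s × Fin r => N p.1 p.2) (hd : r ≤ d)
    (hω : LinearIndependent L (Sum.elim w' w)) (hNker : LinearMap.ker (N.vecMulBase F) = ⊥)
    {R : Submodule F K} (hR : finrank F R = r) :
    (∃ x, R ≤ spanOut F L K s r u N xs w' w x) ↔
      ∃ x, R ≤ spanIn F L K s r u N w' w x := by
  simp only [spanOut_eq, spanIn_eq]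
  constructor
  · rintro ⟨x, hx⟩
    simpa using exists_le_flipSpan_mul_add hN hd hω hNker hR hx 0
  · rintro ⟨x, hx⟩
    exact exists_le_flipSpan_mul_add hN hd hω hNker hR hx xs

end Absorber

/-- **Lemma 6.2 (absorber admissibility)**: for `d ≥ d₀(r)`, fields `F_q ⊆ L = F_{q^ℓ} ⊆
K = F_{q^{ℓm}}`, jointly `F_q`-generic `N ∈ L^{s×r}`, `x* ∈ L^{s×u}` of degree `d`, and
`(w', w) ∈ K^r × K^u` with `L`-linearly independent coordinates, the out- and in-flips
`P_out, P_in` satisfy the five listed properties. -/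
theorem absorber_admissible (s r u : ℕ) (hr : 1 ≤ r) (hrs : r < s) (hu : 1 ≤ u) :
    ∃ d₀ : ℕ, ∀ d : ℕ, d₀ ≤ d →
      ∀ (F : Type) [Field F] [Fintype F],
      ∀ ℓ m : ℕ, 1 ≤ ℓ → 1 ≤ m →
      ∀ (L : Type) [Field L] [Algebra F L], Module.finrank F L = ℓ →
      ∀ (K : Type) [Field K] [Algebra F K] [Algebra L K] [IsScalarTower F L K],
        Module.finrank L K = m →
      ∀ (N : Matrix (Fin s) (Fin r) L) (xs : Matrix (Fin s) (Fin u) L),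
        IsGeneric F L d (Sum.elim (fun p : Fin s × Fin r => N p.1 p.2)
          (fun p : Fin s × Fin u => xs p.1 p.2)) →
      ∀ (w' : Fin r → K) (w : Fin u → K),
        LinearIndependent L (Sum.elim w' w) →
        -- (1) `w' + xw` is `L`-linearly independent for all `x ∈ L^{r×u}`
        (∀ x : Matrix (Fin r) (Fin u) L,
          LinearIndependent L
            (fun i => w' i + Matrix.mulVec (x.map (algebraMap L K)) w i)) ∧
        -- (2) distinct parameters give distinct spaces, all of dimension `s`
        (Function.Injective (spanOut F L K s r u N xs w' w)) ∧
        (Function.Injective (spanIn F L K s r u N w' w)) ∧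
        (∀ x : Matrix (Fin r) (Fin u) L,
          Module.finrank F (spanOut F L K s r u N xs w' w x) = s ∧
          Module.finrank F (spanIn F L K s r u N w' w x) = s) ∧
        -- (3) distinct members of the same flip meet in dimension `< r`
        (∀ P ∈ Set.range (spanOut F L K s r u N xs w' w),
          ∀ P' ∈ Set.range (spanOut F L K s r u N xs w' w), P ≠ P' →
            Module.finrank F (P ⊓ P' : Submodule F K) < r) ∧
        (∀ P ∈ Set.range (spanIn F L K s r u N w' w),
          ∀ P' ∈ Set.range (spanIn F L K s r u N w' w), P ≠ P' →
            Module.finrank F (P ⊓ P' : Submodule F K) < r) ∧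
        -- (4) members of different flips meet in dimension `≤ r`
        (∀ P ∈ Set.range (spanOut F L K s r u N xs w' w),
          ∀ P' ∈ Set.range (spanIn F L K s r u N w' w),
            Module.finrank F (P ⊓ P' : Submodule F K) ≤ r) ∧
        -- (5) `∂_{s,r} P_out = ∂_{s,r} P_in`
        (∀ R : Submodule F K, Module.finrank F R = r →
          {P | P ∈ Set.range (spanOut F L K s r u N xs w' w) ∧ R ≤ P}.ncard =
            {P | P ∈ Set.range (spanIn F L K s r u N w' w) ∧ R ≤ P}.ncard) := by
  refine ⟨r + 1, fun d hd F _ _ ℓ m hℓ hm L _ _ hL K _ _ _ _ hK N xs hgen w' w hw => ?_⟩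
  have : FiniteDimensional F L := Module.finite_of_finrank_pos (hL ▸ hℓ)
  have : FiniteDimensional L K := Module.finite_of_finrank_pos (hK ▸ hm)
  have : FiniteDimensional F K := Module.Finite.trans L K
  have hNgen : IsGeneric F L d fun p : Fin s × Fin r => N p.1 p.2 :=
    (hgen.comp_injective Sum.inl_injective :)
  have hN := hNgen.ker_vecMulBase_eq_bot hr (by omega)
  have hdim (A : Matrix (Fin s) (Fin u) L) : finrank F (flipSpan F N w' w A) = s := by
    rw [flipSpan, finrank_span_eq_card (linearIndependent_flipVec hw hN A), Fintype.card_fin]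
  have hout := pairwise_finrank_spanOut_inf_lt (xs := xs) hNgen (by omega) hw hN
  have hin := pairwise_finrank_spanIn_inf_lt hNgen (by omega) hw hN
  refine ⟨linearIndependent_add_mulVec_map hw,
    Submodule.injective_of_pairwise_finrank_inf_lt hout (fun x => by rw [spanOut_eq, hdim]) hrs,
    Submodule.injective_of_pairwise_finrank_inf_lt hin (fun x => by rw [spanIn_eq, hdim]) hrs,
    fun x => ⟨by rw [spanOut_eq, hdim], by rw [spanIn_eq, hdim]⟩,
    hout.range_pairwise, hin.range_pairwise, ?_, fun R hR => ?_⟩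
  · rintro _ ⟨x, rfl⟩ _ ⟨x', rfl⟩
    exact finrank_spanOut_inf_spanIn_le hgen hd hu hw hN x x'
  · refine Submodule.ncard_setOf_le_eq hR hout.range_pairwise hin.range_pairwise ?_
    simpa only [Set.exists_range_iff] using
      exists_le_spanOut_iff_exists_le_spanIn hNgen (by omega) hw hN hR
end
end
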